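/- arXiv:1505.04955 — 11 statements merged into one kernel-verified Lean document; each statement's English description precedes it below -/
import Mathlib

section
/- There is no nonzero linear map V : ℂ² ⊗ ℂ² → ℂ² such that for all unit vectors |ψ⟩, |φ⟩ ∈ ℂ², V(|ψ⟩⊗|φ⟩) is a complex multiple of α|ψ⟩ + β z(ψ,φ)|φ⟩ for some unimodular complex number z(ψ,φ) (possibly depending on ψ, φ), where α, β are fixed nonzero complex numbers with |α|² + |β|² = 1. -/
/-!
Take an orthonormal pair `a, b` and write `V (a ⊗ a) = λ a`, `V (a ⊗ b) = C (α a + β z b)`.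
For `|u| = 1` the vector `w = (3/5) a + (4/5) u b` is a unit vector, and comparing the
coefficients of `a` and `b` in `V (a ⊗ w) = (3/5) V (a ⊗ a) + (4/5) u V (a ⊗ b)` with the
superposition form of `V (a ⊗ w)` gives `|(3/5)(λ - Cβz) + (4/5) u Cα| = |Cα|` for all
such `u`. So the circle of radius `(4/5)|Cα|` about `(3/5)(λ - Cβz)` lies on the circle of
radius `|Cα|` about `0`, which forces `C = 0` and `λ = 0`. Thus `V` kills every `a ⊗ a` and `a ⊗ b`, in
particular every tensor of two vectors of an orthonormal basis.
-/

open scoped TensorProduct InnerProductSpace ComplexConjugate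

theorem Complex.eq_zero_of_forall_norm_add_mul_eq {A B : ℂ} {c d : ℝ} (hc : c ≠ 0)
    (hd : d ≠ 0) (hcd : c ^ 2 + d ^ 2 = 1)
    (h : ∀ u : ℂ, ‖u‖ = 1 → ‖c * A + d * u * B‖ = ‖B‖) : A = 0 ∧ B = 0 := by
  have key : ∀ u : ℂ, ‖u‖ = 1 →
      c * (normSq A - normSq B) + 2 * d * (A * conj B * conj u).re = 0 := by
    intro u hu
    have hsq := congrArg (· ^ 2) (h u hu)
    have hu' : normSq u = 1 := by rw [← Complex.sq_norm, hu, one_pow]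
    have hre : (c * A * conj (d * u * B)).re = c * d * (A * conj B * conj u).re := by
      rw [← re_ofReal_mul, ofReal_mul, map_mul, map_mul, conj_ofReal]
      ring_nf
    simp only [Complex.sq_norm, normSq_add, normSq_mul, normSq_ofReal, hu', hre] at hsq
    have : c * (c * (normSq A - normSq B) + 2 * d * (A * conj B * conj u).re) = 0 := by
      linear_combination hsq - normSq B * hcd
    simpa [hc] using this
  have h₁ := key 1 (by simp)
  have h₂ := key (-1) (by simp)
  have hI := key I (by simp)
  rw [map_one, mul_one] at h₁
  rw [map_neg, map_one, mul_neg_one, neg_re] at h₂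
  rw [conj_I, mul_neg, neg_re, mul_I_re, neg_neg] at hI
  have hnorm : normSq A = normSq B := by
    have : c * (normSq A - normSq B) = 0 := by linarith
    simpa [hc, sub_eq_zero] using this
  have hprod : A * conj B = 0 := by
    rw [hnorm, sub_self, mul_zero, zero_add, mul_eq_zero] at h₁ hI
    have h2d : 2 * d ≠ 0 := mul_ne_zero two_ne_zero hd
    exact Complex.ext (h₁.resolve_left h2d) (hI.resolve_left h2d)
  have hB : B = 0 := by
    have := congrArg normSq hprod
    rwa [normSq_mul, normSq_conj, hnorm, map_zero, mul_self_eq_zero, normSq_eq_zero] at this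
  exact ⟨by rwa [hB, map_zero, normSq_eq_zero] at hnorm, hB⟩

section

variable {E : Type*} [NormedAddCommGroup E] [InnerProductSpace ℂ E]

def IsSuperposer (α β : ℂ) (V : E ⊗[ℂ] E →ₗ[ℂ] E) : Prop :=
  ∀ ψ φ : E, ‖ψ‖ = 1 → ‖φ‖ = 1 →
    ∃ C z : ℂ, ‖z‖ = 1 ∧ V (ψ ⊗ₜ[ℂ] φ) = C • (α • ψ + (β * z) • φ)

theorem Orthonormal.norm_smul_add_smul_sq {a b : E} (hab : Orthonormal ℂ ![a, b]) (x y : ℂ) :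
    ‖x • a + y • b‖ ^ 2 = ‖x‖ ^ 2 + ‖y‖ ^ 2 := by
  have ha : ‖a‖ = 1 := hab.norm_eq_one 0
  have hb : ‖b‖ = 1 := hab.norm_eq_one 1
  have hab' : ⟪a, b⟫_ℂ = 0 := hab.inner_eq_zero (i := 0) (j := 1) (by decide)
  rw [norm_add_sq (𝕜 := ℂ), inner_smul_left, inner_smul_right, hab', mul_zero, mul_zero,
    map_zero, mul_zero, add_zero, norm_smul, norm_smul, ha, hb, mul_one, mul_one]

theorem IsSuperposer.norm_add_mul_eq {α β : ℂ} {V : E ⊗[ℂ] E →ₗ[ℂ] E}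
    (hV : IsSuperposer α β V) (hβ : β ≠ 0) {a b : E} (hab : Orthonormal ℂ ![a, b])
    {lam C z : ℂ} (hz : ‖z‖ = 1) (hP : V (a ⊗ₜ a) = lam • a)
    (hQ : V (a ⊗ₜ b) = C • (α • a + (β * z) • b)) {c d : ℝ} (hd : d ≠ 0)
    (hcd : c ^ 2 + d ^ 2 = 1) {u : ℂ} (hu : ‖u‖ = 1) :
    ‖c * (lam - C * z * β) + d * u * (C * α)‖ = ‖C * α‖ := by
  have hw : ‖(c : ℂ) • a + (d * u) • b‖ = 1 := by
    rw [← pow_eq_one_iff_of_nonneg (norm_nonneg _) two_ne_zero, hab.norm_smul_add_smul_sq,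
      norm_mul, hu, mul_one, Complex.norm_real, Complex.norm_real, Real.norm_eq_abs,
      Real.norm_eq_abs, sq_abs, sq_abs, hcd]
  obtain ⟨Cw, zw, hzw, hVw⟩ := hV a _ (hab.norm_eq_one 0) hw
  have hcoef : (c * lam + d * u * (C * α)) • a + (d * u * (C * β * z)) • b =
      (Cw * α + c * (Cw * β * zw)) • a + (d * u * (Cw * β * zw)) • b := by
    calc _ = V (a ⊗ₜ ((c : ℂ) • a + (d * u) • b)) := by
          rw [TensorProduct.tmul_add, TensorProduct.tmul_smul, TensorProduct.tmul_smul,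
            map_add, map_smul, map_smul, hP, hQ]
          module
      _ = _ := by rw [hVw]; module
  obtain ⟨hcoef_a, hcoef_b⟩ := hab.linearIndependent.eq_of_pair hcoef
  have hCz : Cw * zw = C * z := by
    have hu₀ : u ≠ 0 := ne_zero_of_norm_ne_zero (by rw [hu]; exact one_ne_zero)
    have hduβ : (d : ℂ) * u * β ≠ 0 :=
      mul_ne_zero (mul_ne_zero (by exact_mod_cast hd) hu₀) hβ
    exact mul_left_cancel₀ hduβ (by linear_combination -hcoef_b)
  have hCw : ‖Cw‖ = ‖C‖ := by
    simpa [hzw, hz] using congrArg norm hCz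
  calc _ = ‖Cw * α‖ := by congr 1; linear_combination hcoef_a + c * β * hCz
    _ = ‖C * α‖ := by rw [norm_mul, norm_mul, hCw]

theorem IsSuperposer.apply_tmul_eq_zero {α β : ℂ} {V : E ⊗[ℂ] E →ₗ[ℂ] E}
    (hV : IsSuperposer α β V) (hα : α ≠ 0) (hβ : β ≠ 0) {a b : E}
    (hab : Orthonormal ℂ ![a, b]) : V (a ⊗ₜ a) = 0 ∧ V (a ⊗ₜ b) = 0 := by
  have ha : ‖a‖ = 1 := hab.norm_eq_one 0
  obtain ⟨C₀, z₀, -, hP⟩ := hV a a ha ha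
  obtain ⟨C, z, hz, hQ⟩ := hV a b ha (hab.norm_eq_one 1)
  set lam := C₀ * (α + β * z₀)
  replace hP : V (a ⊗ₜ a) = lam • a := by rw [hP]; module
  obtain ⟨hA, hB⟩ := Complex.eq_zero_of_forall_norm_add_mul_eq (c := 3 / 5) (d := 4 / 5)
    (by norm_num) (by norm_num) (by norm_num)
    fun u hu => hV.norm_add_mul_eq hβ hab hz hP hQ (by norm_num) (by norm_num) hu
  have hC : C = 0 := (mul_eq_zero.mp hB).resolve_right hα
  refine ⟨?_, ?_⟩
  · rw [hP, show lam = 0 by linear_combination hA + z * β * hC, zero_smul]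
  · rw [hQ, hC, zero_smul]

theorem IsSuperposer.eq_zero {α β : ℂ} {V : E ⊗[ℂ] E →ₗ[ℂ] E} {ι : Type*}
    [Fintype ι] [Nontrivial ι] (b : OrthonormalBasis ι ℂ E) (hV : IsSuperposer α β V)
    (hα : α ≠ 0) (hβ : β ≠ 0) : V = 0 := by
  have hpair : ∀ i j, i ≠ j → Orthonormal ℂ ![b i, b j] := fun i j hij => by
    simp [b.orthonormal.inner_eq_zero hij]
  have hbasis : ∀ i j, V (b i ⊗ₜ b j) = 0 := by
    intro i j
    rcases eq_or_ne i j with rfl | hij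
    · obtain ⟨k, hk⟩ := exists_ne i
      exact (hV.apply_tmul_eq_zero hα hβ (hpair i k hk.symm)).1
    · exact (hV.apply_tmul_eq_zero hα hβ (hpair i j hij)).2
  exact (b.toBasis.tensorProduct b.toBasis).ext fun ⟨i, j⟩ => by simpa using hbasis i j

end

theorem no_universal_superposer_general
    (α β : ℂ) (hα : α ≠ 0) (hβ : β ≠ 0)
    (V : (EuclideanSpace ℂ (Fin 2)) ⊗[ℂ] (EuclideanSpace ℂ (Fin 2)) →ₗ[ℂ]
        EuclideanSpace ℂ (Fin 2))
    (h : ∀ ψ φ : EuclideanSpace ℂ (Fin 2), ‖ψ‖ = 1 → ‖φ‖ = 1 →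
      ∃ C z : ℂ, ‖z‖ = 1 ∧ V (ψ ⊗ₜ[ℂ] φ) = C • (α • ψ + (β * z) • φ)) :
    V = 0 :=
  IsSuperposer.eq_zero (EuclideanSpace.basisFun (Fin 2) ℂ) h hα hβ

/-- No-go theorem (qubit case): there is no nonzero linear map `V : ℂ²⊗ℂ² → ℂ²`
producing, for every pair of unit vectors `ψ, φ`, a multiple of the superposition
`α•ψ + β•z(ψ,φ)•φ` with `z(ψ,φ)` unimodular. -/
theorem no_universal_superposer
    (α β : ℂ) (hα : α ≠ 0) (hβ : β ≠ 0) (hnorm : ‖α‖ ^ 2 + ‖β‖ ^ 2 = 1)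
    (V : (EuclideanSpace ℂ (Fin 2)) ⊗[ℂ] (EuclideanSpace ℂ (Fin 2)) →ₗ[ℂ]
        EuclideanSpace ℂ (Fin 2))
    (h : ∀ ψ φ : EuclideanSpace ℂ (Fin 2), ‖ψ‖ = 1 → ‖φ‖ = 1 →
      ∃ C z : ℂ, ‖z‖ = 1 ∧ V (ψ ⊗ₜ[ℂ] φ) = C • (α • ψ + (β * z) • φ)) :
    V = 0 :=
  no_universal_superposer_general α β hα hβ V h
end

section
/- Let V : ℂ² ⊗ ℂ² → ℂ² be a linear map such that for every unit vector |ψ⟩ ∈ ℂ², the vector V(|ψ⟩⊗|ψ⟩) is orthogonal to every vector perpendicular to |ψ⟩ (i.e., V(|ψ⟩⊗|ψ⟩) ∝ |ψ⟩). Then there exist vectors |χ₁⟩, |χ₂⟩ ∈ ℂ² such that V(|ψ⟩⊗|φ⟩) = ⟨χ₁|φ⟩|ψ⟩ + ⟨χ₂|ψ⟩|φ⟩ for all |ψ⟩, |φ⟩ ∈ ℂ². -/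
/-!
Write `B x y = V (x ⊗ y)`. After rescaling, `B x x` is collinear with `x` for every `x`, so the
cubic form `det (x, B x x)` vanishes identically on `ℂ²`; its four coefficients are linear
relations among the coordinates of the vectors `B (eᵢ) (eⱼ)`, and these are exactly what is
needed for `B x y = f y • x + g x • y` with explicit linear functionals `f`, `g`. Riesz
representation turns `f` and `g` into `⟪χ₁, ·⟫` and `⟪χ₂, ·⟫`.
-/

open scoped TensorProduct

theorem LinearMap.exists_apply_self_eq_smul_of_norm_eq_one {𝕜 E : Type*} [RCLike 𝕜]
    [NormedAddCommGroup E] [NormedSpace 𝕜 E] {B : E →ₗ[𝕜] E →ₗ[𝕜] E}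
    (hB : ∀ x, ‖x‖ = 1 → ∃ c : 𝕜, B x x = c • x) (x : E) : ∃ c : 𝕜, B x x = c • x := by
  rcases eq_or_ne x 0 with rfl | hx
  · exact ⟨0, by simp⟩
  set r : 𝕜 := (‖x‖ : 𝕜)
  set u := r⁻¹ • x
  have hx' : x = r • u := (smul_inv_smul₀ (by simpa [r] using hx) x).symm
  obtain ⟨c, hc⟩ := hB u (norm_smul_inv_norm hx)
  refine ⟨r * c, ?_⟩
  rw [hx']
  simp only [map_smul, LinearMap.smul_apply, hc]
  module

theorem InnerProductSpace.exists_inner_eq {𝕜 E : Type*} [RCLike 𝕜] [NormedAddCommGroup E]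
    [InnerProductSpace 𝕜 E] [FiniteDimensional 𝕜 E] (f : Module.Dual 𝕜 E) :
    ∃ χ : E, ∀ x, inner 𝕜 χ x = f x := by
  have := FiniteDimensional.complete 𝕜 E
  exact ⟨(toDual 𝕜 E).symm (LinearMap.toContinuousLinearMap f), fun _ => toDual_symm_apply⟩

namespace Module.Basis

variable {K M : Type*} [Field K] [AddCommGroup M] [Module K M] (b : Basis (Fin 2) K M)

theorem repr_mul_repr_eq_of_eq_smul {x v : M} {c : K} (h : v = c • x) :
    b.repr x 0 * b.repr v 1 = b.repr x 1 * b.repr v 0 := by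
  subst h
  simp only [map_smul, Finsupp.smul_apply, smul_eq_mul]
  ring

theorem repr_apply_basis_of_apply_self_eq_smul (hK : (2 : K) ≠ 0) {B : M →ₗ[K] M →ₗ[K] M}
    (hB : ∀ x, ∃ c : K, B x x = c • x) :
    b.repr (B (b 0) (b 0)) 1 = 0 ∧ b.repr (B (b 1) (b 1)) 0 = 0 ∧
      b.repr (B (b 0) (b 0)) 0 = b.repr (B (b 1) (b 0)) 1 + b.repr (B (b 0) (b 1)) 1 ∧
      b.repr (B (b 1) (b 1)) 1 = b.repr (B (b 0) (b 1)) 0 + b.repr (B (b 1) (b 0)) 0 := by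
  have hdet (x : M) : b.repr x 0 * b.repr (B x x) 1 = b.repr x 1 * b.repr (B x x) 0 :=
    let ⟨_, hc⟩ := hB x
    b.repr_mul_repr_eq_of_eq_smul hc
  -- `hdet` is a binary cubic form in the coordinates of `x`: four values determine it.
  have h0 := hdet (b 0)
  have h1 := hdet (b 1)
  have hp := hdet (b 0 + b 1)
  have hm := hdet (b 0 - b 1)
  simp only [map_add, map_sub, LinearMap.add_apply, LinearMap.sub_apply, Finsupp.add_apply,
    Finsupp.sub_apply, repr_self, Finsupp.single_eq_same, Finsupp.single_eq_of_ne zero_ne_one,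
    Finsupp.single_eq_of_ne one_ne_zero, one_mul, zero_mul] at h0 h1 hp hm
  refine ⟨h0, h1.symm, mul_left_cancel₀ hK ?_, mul_left_cancel₀ hK ?_⟩
  · linear_combination hm - hp + 2 * h1
  · linear_combination hp + hm - 2 * h0

end Module.Basis

theorem LinearMap.exists_dual_of_apply_self_eq_smul {K M : Type*} [Field K] [AddCommGroup M]
    [Module K M] (hK : (2 : K) ≠ 0) (hM : Module.finrank K M = 2) {B : M →ₗ[K] M →ₗ[K] M}
    (hB : ∀ x, ∃ c : K, B x x = c • x) :
    ∃ f g : Module.Dual K M, ∀ x y, B x y = f y • x + g x • y := by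
  have : Module.Finite K M := Module.finite_of_finrank_eq_succ hM
  let b := Module.finBasisOfFinrankEq K M hM
  obtain ⟨h00, h11, h00', h11'⟩ := b.repr_apply_basis_of_apply_self_eq_smul hK hB
  let f := b.repr (B (b 1) (b 0)) 1 • b.coord 0 + b.repr (B (b 0) (b 1)) 0 • b.coord 1
  let g := b.repr (B (b 0) (b 1)) 1 • b.coord 0 + b.repr (B (b 1) (b 0)) 0 • b.coord 1
  let C : M →ₗ[K] M →ₗ[K] M := LinearMap.mk₂ K (fun x y => f y • x + g x • y)
    (fun _ _ _ => by simp only [map_add, smul_add, add_smul]; abel)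
    (fun _ _ _ => by simp only [map_smul, smul_smul, smul_eq_mul]; module)
    (fun _ _ _ => by simp only [map_add, smul_add, add_smul]; abel)
    (fun _ _ _ => by simp only [map_smul, smul_smul, smul_eq_mul]; module)
  have hBC : B = C := b.ext fun i => b.ext fun j => b.ext_elem fun k => by
    fin_cases i <;> fin_cases j <;> fin_cases k <;> simp [C, f, g, h00, h11, h00', h11']
  exact ⟨f, g, LinearMap.congr_fun₂ hBC⟩

/-- If a linear map `V : ℂ²⊗ℂ² → ℂ²` satisfies `V(ψ⊗ψ) ∝ ψ` for every unit vector
`ψ`, then there are vectors `χ₁, χ₂` such that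
`V(ψ⊗φ) = ⟨χ₁|φ⟩ψ + ⟨χ₂|ψ⟩φ` for all `ψ, φ`. -/
theorem diagonal_proportional_implies_braket_form
    (V : (EuclideanSpace ℂ (Fin 2)) ⊗[ℂ] (EuclideanSpace ℂ (Fin 2)) →ₗ[ℂ]
        EuclideanSpace ℂ (Fin 2))
    (h : ∀ ψ : EuclideanSpace ℂ (Fin 2), ‖ψ‖ = 1 → ∃ c : ℂ, V (ψ ⊗ₜ[ℂ] ψ) = c • ψ) :
    ∃ χ₁ χ₂ : EuclideanSpace ℂ (Fin 2),
      ∀ ψ φ : EuclideanSpace ℂ (Fin 2),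
        V (ψ ⊗ₜ[ℂ] φ) = (inner ℂ χ₁ φ : ℂ) • ψ + (inner ℂ χ₂ ψ : ℂ) • φ := by
  let B := (TensorProduct.mk ℂ _ _).compr₂ V
  obtain ⟨f, g, hfg⟩ := B.exists_dual_of_apply_self_eq_smul two_ne_zero finrank_euclideanSpace_fin
    (B.exists_apply_self_eq_smul_of_norm_eq_one h)
  obtain ⟨χ₁, hχ₁⟩ := InnerProductSpace.exists_inner_eq f
  obtain ⟨χ₂, hχ₂⟩ := InnerProductSpace.exists_inner_eq g
  exact ⟨χ₁, χ₂, fun ψ φ => by rw [hχ₁, hχ₂]; exact hfg ψ φ⟩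
end

section
/- Let |χ₁⟩, |χ₂⟩ ∈ ℂ² and define V(ψ⊗φ) = ⟨χ₁|φ⟩ψ + ⟨χ₂|ψ⟩φ. Fix nonzero α, β ∈ ℂ. If for all unit vectors ψ, φ ∈ ℂ² there exist a scalar C(ψ,φ) ∈ ℂ and a unimodular scalar Z(ψ,φ) with V(ψ⊗φ) = C(ψ,φ)(α ψ + β Z(ψ,φ) φ), then χ₁ = 0 and χ₂ = 0 (hence V = 0). -/
/-!
Whenever `ψ` and `φ` are linearly independent, comparing coefficients in
`⟨χ₁|φ⟩ψ + ⟨χ₂|ψ⟩φ = C(αψ + βZφ)` gives `⟨χ₁|φ⟩ = Cα` and `⟨χ₂|ψ⟩ = CβZ`, hence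
`|β| |⟨χ₁|φ⟩| = |α| |⟨χ₂|ψ⟩|`. Fixing `ψ = e₀`, the functional `⟨χ₁|·⟩` therefore has constant
modulus on all unit vectors off the line `ℂ e₀`; testing it on `e₁` and `(e₀ ± e₁)/√2`,
`(e₀ + i e₁)/√2` forces `χ₁ = 0`. Fixing `φ = e₀` instead gives `χ₂ = 0` in the same way.
-/

open ComplexConjugate

theorem norm_mul_norm_eq_of_smul_add_smul_eq {K V : Type*} [NormedField K] [AddCommGroup V]
    [Module K V] {u v : V} (huv : LinearIndependent K ![u, v]) {a b C α β Z : K}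
    (hZ : ‖Z‖ = 1) (h : a • u + b • v = C • (α • u + (β * Z) • v)) :
    ‖β‖ * ‖a‖ = ‖α‖ * ‖b‖ := by
  rw [smul_add, smul_smul, smul_smul] at h
  obtain ⟨rfl, rfl⟩ := huv.eq_of_pair h
  simp only [norm_mul, hZ]
  ring

theorem EuclideanSpace.linearIndependent_single_one_pair {𝕜 ι : Type*} [RCLike 𝕜] [Fintype ι]
    [DecidableEq ι] {i j : ι} (hij : i ≠ j) {φ : EuclideanSpace 𝕜 ι} (hφ : φ j ≠ 0) :
    LinearIndependent 𝕜 ![EuclideanSpace.single i 1, φ] := by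
  refine LinearIndependent.pair_iff.2 fun s t hst => ?_
  have ht : t = 0 := by simpa [hij, hφ] using congrArg (· j) hst
  subst ht
  simpa using congrArg (· i) hst

theorem Complex.eq_zero_of_forall_norm_sq_mul_add_mul_eq {a b : ℂ} {k : ℝ}
    (h : ∀ x y : ℂ, y ≠ 0 → ‖a * x + b * y‖ ^ 2 = k * (‖x‖ ^ 2 + ‖y‖ ^ 2)) :
    a = 0 ∧ b = 0 := by
  have h₁ := h 0 1 one_ne_zero
  have h₂ := h 1 1 one_ne_zero
  have h₃ := h 1 (-1) (by norm_num)
  have h₄ := h 1 I I_ne_zero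
  simp only [Complex.sq_norm, normSq_apply, mul_zero, mul_one, zero_add, zero_re, zero_im, add_zero,
    one_re, one_im, add_re, add_im, mul_neg, neg_re, neg_im, neg_neg, neg_zero, mul_re, I_re, I_im,
    zero_sub, mul_im] at h₁ h₂ h₃ h₄
  have hre : a.re * b.re + a.im * b.im = 0 := by linear_combination (h₂ - h₃) / 4
  have him : a.im * b.re - a.re * b.im = 0 := by linear_combination (h₄ - h₂) / 2 + hre
  have ha : a.re * a.re + a.im * a.im = k := by linear_combination (h₂ + h₃) / 2 - h₁
  -- Lagrange's identity `|a|² |b|² = (Re (a b̄))² + (Im (a b̄))²`, with `|a|² = |b|² = k`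
  have hk : k = 0 := by nlinarith [sq_nonneg k]
  subst hk
  constructor <;> apply Complex.ext <;> simp <;> nlinarith

theorem EuclideanSpace.eq_zero_of_forall_norm_inner_eq {χ : EuclideanSpace ℂ (Fin 2)} {c : ℝ}
    (h : ∀ φ : EuclideanSpace ℂ (Fin 2), ‖φ‖ = 1 → φ 1 ≠ 0 → ‖inner ℂ χ φ‖ = c) : χ = 0 := by
  have hom : ∀ φ : EuclideanSpace ℂ (Fin 2), φ 1 ≠ 0 → ‖inner ℂ χ φ‖ ^ 2 = c ^ 2 * ‖φ‖ ^ 2 := by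
    intro φ hφ
    have hφ0 : φ ≠ 0 := fun h0 => hφ (by simp [h0])
    rw [← h _ (norm_smul_inv_norm (𝕜 := ℂ) hφ0) (by simp [hφ, hφ0]), inner_smul_right, norm_mul]
    simp only [Complex.coe_algebraMap, norm_inv, Complex.norm_real, norm_norm]
    field_simp
  have hcoord : ∀ x y : ℂ, y ≠ 0 →
      ‖conj (χ 0) * x + conj (χ 1) * y‖ ^ 2 = c ^ 2 * (‖x‖ ^ 2 + ‖y‖ ^ 2) := by
    intro x y hy
    simpa [EuclideanSpace.norm_sq_eq, PiLp.inner_apply, Fin.sum_univ_two, mul_comm]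
      using hom !₂[x, y] hy
  obtain ⟨h0, h1⟩ := Complex.eq_zero_of_forall_norm_sq_mul_add_mul_eq hcoord
  ext i
  fin_cases i <;> simp_all

theorem braket_form_superposer_is_zero_general
    (χ₁ χ₂ : EuclideanSpace ℂ (Fin 2))
    (α β : ℂ) (hα : α ≠ 0) (hβ : β ≠ 0)
    (h : ∀ ψ φ : EuclideanSpace ℂ (Fin 2), ‖ψ‖ = 1 → ‖φ‖ = 1 →
      ∃ C Z : ℂ, ‖Z‖ = 1 ∧
        (inner ℂ χ₁ φ : ℂ) • ψ + (inner ℂ χ₂ ψ : ℂ) • φ = C • (α • ψ + (β * Z) • φ)) :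
    χ₁ = 0 ∧ χ₂ = 0 := by
  have hrel : ∀ ψ φ : EuclideanSpace ℂ (Fin 2), ‖ψ‖ = 1 → ‖φ‖ = 1 →
      LinearIndependent ℂ ![ψ, φ] → ‖β‖ * ‖inner ℂ χ₁ φ‖ = ‖α‖ * ‖inner ℂ χ₂ ψ‖ := by
    intro ψ φ hψ hφ hψφ
    obtain ⟨C, Z, hZ, hV⟩ := h ψ φ hψ hφ
    exact norm_mul_norm_eq_of_smul_add_smul_eq hψφ hZ hV
  set e₀ := EuclideanSpace.single (0 : Fin 2) (1 : ℂ)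
  have he₀ : ‖e₀‖ = 1 := by simp [e₀]
  have hind : ∀ φ : EuclideanSpace ℂ (Fin 2), φ 1 ≠ 0 → LinearIndependent ℂ ![e₀, φ] :=
    fun φ => EuclideanSpace.linearIndependent_single_one_pair zero_ne_one
  constructor
  · refine EuclideanSpace.eq_zero_of_forall_norm_inner_eq
      (c := ‖α‖ * ‖inner ℂ χ₂ e₀‖ / ‖β‖) fun φ hφ hφ1 => ?_
    rw [eq_div_iff (norm_ne_zero_iff.2 hβ), mul_comm]
    exact hrel e₀ φ he₀ hφ (hind φ hφ1)
  · refine EuclideanSpace.eq_zero_of_forall_norm_inner_eq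
      (c := ‖β‖ * ‖inner ℂ χ₁ e₀‖ / ‖α‖) fun ψ hψ hψ1 => ?_
    rw [eq_div_iff (norm_ne_zero_iff.2 hα), mul_comm]
    exact (hrel ψ e₀ hψ he₀ (LinearIndependent.pair_symm_iff.1 (hind ψ hψ1))).symm

/-- If the map `V(ψ⊗φ) = ⟨χ₁|φ⟩ψ + ⟨χ₂|ψ⟩φ` produces, for all unit vectors `ψ, φ`,
a multiple of `αψ + βZ(ψ,φ)φ` with `Z` unimodular (α, β fixed nonzero), then
`χ₁ = 0` and `χ₂ = 0`. -/
theorem braket_form_superposer_is_zero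
    (χ₁ χ₂ : EuclideanSpace ℂ (Fin 2))
    (α β : ℂ) (hα : α ≠ 0) (hβ : β ≠ 0) (hnorm : ‖α‖ ^ 2 + ‖β‖ ^ 2 = 1)
    (h : ∀ ψ φ : EuclideanSpace ℂ (Fin 2), ‖ψ‖ = 1 → ‖φ‖ = 1 →
      ∃ C Z : ℂ, ‖Z‖ = 1 ∧
        (inner ℂ χ₁ φ : ℂ) • ψ + (inner ℂ χ₂ ψ : ℂ) • φ = C • (α • ψ + (β * Z) • φ)) :
    χ₁ = 0 ∧ χ₂ = 0 :=
  braket_form_superposer_is_zero_general χ₁ χ₂ α β hα hβ h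
end

section
/- The superposition vector Ψ(ψ,φ) = α(⟨χ|φ⟩/|⟨χ|φ⟩|)ψ + β(⟨χ|ψ⟩/|⟨χ|ψ⟩|)φ is covariant under phase changes: replacing ψ by e^{iθ₁}ψ, φ by e^{iθ₂}φ, and χ by e^{iθ₃}χ changes Ψ only by a global phase factor. Consequently the map (P_ψ, P_φ) ↦ |Ψ⟩⟨Ψ| is a well-defined function of the projectors P_ψ, P_φ (given fixed P_χ). -/
/-- The superposition vector `Ψ(χ;ψ,φ) = α(⟨χ|φ⟩/|⟨χ|φ⟩|)ψ + β(⟨χ|ψ⟩/|⟨χ|ψ⟩|)φ`. -/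
noncomputable def supVec {H : Type*} [NormedAddCommGroup H] [InnerProductSpace ℂ H]
    (α β : ℂ) (χ ψ φ : H) : H :=
  (α * ((inner ℂ χ φ : ℂ) / (‖(inner ℂ χ φ : ℂ)‖ : ℂ))) • ψ
    + (β * ((inner ℂ χ ψ : ℂ) / (‖(inner ℂ χ ψ : ℂ)‖ : ℂ))) • φ

/-! Multiplying `χ, ψ, φ` by unit scalars `c, a, b` multiplies both normalised overlaps
`⟨χ|·⟩/|⟨χ|·⟩|` by `c̄` and the respective unit, so both terms of `Ψ` pick up the same factor
`a b c̄`. For `e^{iθ₁}, e^{iθ₂}, e^{iθ₃}` this factor is `e^{i(θ₁ + θ₂ - θ₃)}`. -/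

open ComplexConjugate

lemma Complex.mul_div_norm_mul_of_norm_eq_one {u : ℂ} (hu : ‖u‖ = 1) (z : ℂ) :
    u * z / (‖u * z‖ : ℂ) = u * (z / (‖z‖ : ℂ)) := by
  rw [norm_mul, hu, one_mul, mul_div_assoc]

lemma inner_smul_smul_div_norm {H : Type*} [NormedAddCommGroup H] [InnerProductSpace ℂ H]
    (x y : H) {b c : ℂ} (hb : ‖b‖ = 1) (hc : ‖c‖ = 1) :
    inner ℂ (c • x) (b • y) / (‖inner ℂ (c • x) (b • y)‖ : ℂ)
      = conj c * b * (inner ℂ x y / (‖inner ℂ x y‖ : ℂ)) := by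
  rw [inner_smul_left, inner_smul_right, ← mul_assoc, Complex.mul_div_norm_mul_of_norm_eq_one]
  rw [norm_mul, Complex.norm_conj, hc, hb, one_mul]

lemma supVec_smul_smul_smul {H : Type*} [NormedAddCommGroup H] [InnerProductSpace ℂ H]
    (α β : ℂ) (χ ψ φ : H) {a b c : ℂ} (ha : ‖a‖ = 1) (hb : ‖b‖ = 1) (hc : ‖c‖ = 1) :
    supVec α β (c • χ) (a • ψ) (b • φ) = (a * b * conj c) • supVec α β χ ψ φ := by
  simp only [supVec, inner_smul_smul_div_norm _ _ ha hc, inner_smul_smul_div_norm _ _ hb hc,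
    smul_add, smul_smul]
  congr 2 <;> ring

lemma Complex.exp_mul_I_mul_exp_mul_I_mul_conj (θ₁ θ₂ θ₃ : ℝ) :
    Complex.exp (θ₁ * Complex.I) * Complex.exp (θ₂ * Complex.I)
        * conj (Complex.exp (θ₃ * Complex.I))
      = Complex.exp (↑(θ₁ + θ₂ - θ₃) * Complex.I) := by
  rw [← Complex.exp_conj, ← Complex.exp_add, ← Complex.exp_add]
  congr 1
  simp only [map_mul, Complex.conj_ofReal, Complex.conj_I, Complex.ofReal_sub,
    Complex.ofReal_add]
  ring

theorem supVec_phase_covariant_general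
    {H : Type*} [NormedAddCommGroup H] [InnerProductSpace ℂ H]
    (α β : ℂ) (χ ψ φ : H) :
    ∀ θ₁ θ₂ θ₃ : ℝ, ∃ θ : ℝ,
      supVec α β (Complex.exp (θ₃ * Complex.I) • χ)
          (Complex.exp (θ₁ * Complex.I) • ψ) (Complex.exp (θ₂ * Complex.I) • φ)
        = Complex.exp (θ * Complex.I) • supVec α β χ ψ φ := by
  intro θ₁ θ₂ θ₃
  refine ⟨θ₁ + θ₂ - θ₃, ?_⟩
  rw [supVec_smul_smul_smul α β χ ψ φ (Complex.norm_exp_ofReal_mul_I θ₁)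
    (Complex.norm_exp_ofReal_mul_I θ₂) (Complex.norm_exp_ofReal_mul_I θ₃),
    Complex.exp_mul_I_mul_exp_mul_I_mul_conj]

/-- Phase covariance of the superposition: replacing `ψ, φ, χ` by
`e^{iθ₁}ψ, e^{iθ₂}φ, e^{iθ₃}χ` changes `Ψ` only by a global phase; hence
`(P_ψ, P_φ) ↦ |Ψ⟩⟨Ψ|` is a well-defined function of the projectors. -/
theorem supVec_phase_covariant
    {H : Type*} [NormedAddCommGroup H] [InnerProductSpace ℂ H]
    (α β : ℂ) (χ ψ φ : H) (hψ : ‖ψ‖ = 1) (hφ : ‖φ‖ = 1) (hχ : ‖χ‖ = 1)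
    (h₁ : (inner ℂ χ ψ : ℂ) ≠ 0) (h₂ : (inner ℂ χ φ : ℂ) ≠ 0) :
    ∀ θ₁ θ₂ θ₃ : ℝ, ∃ θ : ℝ,
      supVec α β (Complex.exp (θ₃ * Complex.I) • χ)
          (Complex.exp (θ₁ * Complex.I) • ψ) (Complex.exp (θ₂ * Complex.I) • φ)
        = Complex.exp (θ * Complex.I) • supVec α β χ ψ φ :=
  supVec_phase_covariant_general α β χ ψ φ
end

section
/- For unit vectors ψ, φ, χ with ⟨χ|ψ⟩ ≠ 0, ⟨χ|φ⟩ ≠ 0 and Ψ = α(⟨χ|φ⟩/|⟨χ|φ⟩|)ψ + β(⟨χ|ψ⟩/|⟨χ|ψ⟩|)φ, one has |Ψ⟩⟨Ψ| = |α|²P_ψ + |β|²P_φ + ( αβ̄ · P_ψ P_χ P_φ / √(tr(P_ψP_χ)·tr(P_φP_χ)) + h.c. ), where P_v = |v⟩⟨v| and h.c. denotes the adjoint of the preceding term. -/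
/-- The rank-one operator `|v⟩⟨v| : x ↦ ⟨v|x⟩ v`. -/
noncomputable def rankOne {H : Type*} [NormedAddCommGroup H] [InnerProductSpace ℂ H]
    (v : H) : H →ₗ[ℂ] H where
  toFun x := (inner ℂ v x : ℂ) • v
  map_add' x y := by simp [inner_add_right, add_smul]
  map_smul' c x := by simp [inner_smul_right, smul_smul]

/-!
Expanding `|Ψ⟩⟨Ψ|` sesquilinearly in `Ψ = a ψ + b φ` gives `|a|² P_ψ + |b|² P_φ + a b̄ |ψ⟩⟨φ| + h.c.`.
The phases `⟨χ|φ⟩/|⟨χ|φ⟩|` and `⟨χ|ψ⟩/|⟨χ|ψ⟩|` have modulus one, so `|a| = |α|` and `|b| = |β|`, while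
`P_ψ P_χ P_φ = ⟨ψ|χ⟩⟨χ|φ⟩ |ψ⟩⟨φ|` shows that `a b̄ |ψ⟩⟨φ|` is exactly the stated cross term.
-/

theorem rankOne_eq_toLinearMap_rankOne {H : Type*} [NormedAddCommGroup H] [InnerProductSpace ℂ H]
    (v : H) : rankOne v = (InnerProductSpace.rankOne ℂ v v).toLinearMap :=
  rfl

namespace InnerProductSpace

open ComplexConjugate

variable {𝕜 E : Type*} [RCLike 𝕜] [SeminormedAddCommGroup E] [InnerProductSpace 𝕜 E]

theorem rankOne_smul_add_smul_self (a b : 𝕜) (u v : E) :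
    rankOne 𝕜 (a • u + b • v) (a • u + b • v)
      = ((‖a‖ ^ 2 : ℝ) : 𝕜) • rankOne 𝕜 u u + ((‖b‖ ^ 2 : ℝ) : 𝕜) • rankOne 𝕜 v v
        + ((a * conj b) • rankOne 𝕜 u v + (conj a * b) • rankOne 𝕜 v u) := by
  simp only [map_add, map_smul, map_smulₛₗ, add_apply, smul_apply,
    RCLike.ofReal_pow, ← RCLike.mul_conj]
  module

theorem rankOne_self_comp_rankOne_self_comp_rankOne_self (x y z : E) :
    rankOne 𝕜 x x ∘L rankOne 𝕜 y y ∘L rankOne 𝕜 z z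
      = (inner 𝕜 x y * inner 𝕜 y z) • rankOne 𝕜 x z := by
  rw [rankOne_comp_rankOne, ContinuousLinearMap.comp_smul, rankOne_comp_rankOne, smul_smul,
    mul_comm]

end InnerProductSpace

theorem Complex.norm_mul_div_norm {z : ℂ} (hz : z ≠ 0) (a : ℂ) : ‖a * (z / ‖z‖)‖ = ‖a‖ := by
  simp [hz]

theorem supVec_projector_formula_general
    {H : Type*} [NormedAddCommGroup H] [InnerProductSpace ℂ H]
    (ψ φ χ : H)
    (h₁ : (inner ℂ χ ψ : ℂ) ≠ 0) (h₂ : (inner ℂ χ φ : ℂ) ≠ 0)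
    (α β : ℂ) :
    rankOne ((α * ((inner ℂ χ φ : ℂ) / (‖(inner ℂ χ φ : ℂ)‖ : ℂ))) • ψ
        + (β * ((inner ℂ χ ψ : ℂ) / (‖(inner ℂ χ ψ : ℂ)‖ : ℂ))) • φ)
      = ((‖α‖ ^ 2 : ℝ) : ℂ) • rankOne ψ + ((‖β‖ ^ 2 : ℝ) : ℂ) • rankOne φ
        + ((α * starRingEnd ℂ β / ((‖(inner ℂ χ ψ : ℂ)‖ * ‖(inner ℂ χ φ : ℂ)‖ : ℝ) : ℂ)) •
            (rankOne ψ ∘ₗ rankOne χ ∘ₗ rankOne φ)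
          + (starRingEnd ℂ α * β / ((‖(inner ℂ χ ψ : ℂ)‖ * ‖(inner ℂ χ φ : ℂ)‖ : ℝ) : ℂ)) •
            (rankOne φ ∘ₗ rankOne χ ∘ₗ rankOne ψ)) := by
  simp only [rankOne_eq_toLinearMap_rankOne, ← ContinuousLinearMap.toLinearMap_comp,
    ← ContinuousLinearMap.toLinearMap_smul, ← ContinuousLinearMap.toLinearMap_add]
  congr 1
  rw [InnerProductSpace.rankOne_smul_add_smul_self,
    InnerProductSpace.rankOne_self_comp_rankOne_self_comp_rankOne_self,
    InnerProductSpace.rankOne_self_comp_rankOne_self_comp_rankOne_self, smul_smul, smul_smul,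
    Complex.norm_mul_div_norm h₂, Complex.norm_mul_div_norm h₁]
  -- only the coefficients of the two cross terms remain
  congr 3 <;>
  · simp only [map_mul, map_div₀, Complex.conj_ofReal, inner_conj_symm, Complex.ofReal_mul]
    ring

/-- Explicit formula for the projector onto the superposition
`Ψ = α(⟨χ|φ⟩/|⟨χ|φ⟩|)ψ + β(⟨χ|ψ⟩/|⟨χ|ψ⟩|)φ`:
`|Ψ⟩⟨Ψ| = |α|²P_ψ + |β|²P_φ + (αβ̄ P_ψP_χP_φ/√(tr(P_ψP_χ)tr(P_φP_χ)) + h.c.)`. -/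
theorem supVec_projector_formula
    {H : Type*} [NormedAddCommGroup H] [InnerProductSpace ℂ H]
    (ψ φ χ : H) (hψ : ‖ψ‖ = 1) (hφ : ‖φ‖ = 1) (hχ : ‖χ‖ = 1)
    (h₁ : (inner ℂ χ ψ : ℂ) ≠ 0) (h₂ : (inner ℂ χ φ : ℂ) ≠ 0)
    (α β : ℂ) (hab : ‖α‖ ^ 2 + ‖β‖ ^ 2 = 1) :
    rankOne ((α * ((inner ℂ χ φ : ℂ) / (‖(inner ℂ χ φ : ℂ)‖ : ℂ))) • ψ
        + (β * ((inner ℂ χ ψ : ℂ) / (‖(inner ℂ χ ψ : ℂ)‖ : ℂ))) • φ)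
      = ((‖α‖ ^ 2 : ℝ) : ℂ) • rankOne ψ + ((‖β‖ ^ 2 : ℝ) : ℂ) • rankOne φ
        + ((α * starRingEnd ℂ β / ((‖(inner ℂ χ ψ : ℂ)‖ * ‖(inner ℂ χ φ : ℂ)‖ : ℝ) : ℂ)) •
            (rankOne ψ ∘ₗ rankOne χ ∘ₗ rankOne φ)
          + (starRingEnd ℂ α * β / ((‖(inner ℂ χ ψ : ℂ)‖ * ‖(inner ℂ χ φ : ℂ)‖ : ℝ) : ℂ)) •
            (rankOne φ ∘ₗ rankOne χ ∘ₗ rankOne ψ)) :=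
  supVec_projector_formula_general ψ φ χ h₁ h₂ α β
end

section
/- Let χ be a fixed unit vector in H, c₁, c₂ ∈ (0,1], and let μ = C(√c₁|0⟩ + √c₂|1⟩) be the normalized qubit vector with C = (c₁+c₂)^{-1/2}. Define V₁ = |0⟩⟨0|⊗I⊗I + |1⟩⟨1|⊗S (S the swap on H⊗H), V₂ = I⊗I⊗|χ⟩⟨χ|, V₃ = |μ⟩⟨μ|⊗I⊗I, and Λ_sup(ρ) = tr₁₃(V₃V₂V₁ ρ V₁†V₂†V₃†). Then for every qubit unit vector ν = α|0⟩+β|1⟩ and all unit vectors ψ, φ ∈ H with |⟨χ|ψ⟩|² = c₁ and |⟨χ|φ⟩|² = c₂, Λ_sup(P_ν ⊗ P_ψ ⊗ P_φ) is proportional (with positive factor) to |Ψ⟩⟨Ψ| where Ψ = α(⟨χ|φ⟩/|⟨χ|φ⟩|)ψ + β(⟨χ|ψ⟩/|⟨χ|ψ⟩|)φ. -/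
open Matrix

/-- Partial trace over the first and third tensor factors of `ℂ²⊗H⊗H`. -/
noncomputable def ptrace13 {n : ℕ}
    (M : Matrix (Fin 2 × Fin n × Fin n) (Fin 2 × Fin n × Fin n) ℂ) :
    Matrix (Fin n) (Fin n) ℂ :=
  fun i j => ∑ a : Fin 2, ∑ b : Fin n, M (a, i, b) (a, j, b)

/-- The controlled swap `V₁ = |0⟩⟨0|⊗I⊗I + |1⟩⟨1|⊗S` on `ℂ²⊗H⊗H`. -/
def cswap (n : ℕ) : Matrix (Fin 2 × Fin n × Fin n) (Fin 2 × Fin n × Fin n) ℂ :=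
  fun p q => if p.1 = q.1 then
    (if p.1 = 0 then (if p.2 = q.2 then 1 else 0)
      else (if p.2.1 = q.2.2 ∧ p.2.2 = q.2.1 then 1 else 0))
    else 0

/-- `V₂ = I ⊗ I ⊗ |χ⟩⟨χ|`. -/
def projThird {n : ℕ} (χ : Fin n → ℂ) :
    Matrix (Fin 2 × Fin n × Fin n) (Fin 2 × Fin n × Fin n) ℂ :=
  fun p q => if p.1 = q.1 ∧ p.2.1 = q.2.1 then χ p.2.2 * star (χ q.2.2) else 0

/-- `V₃ = |μ⟩⟨μ| ⊗ I ⊗ I`. -/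
def projFirst {n : ℕ} (μ : Fin 2 → ℂ) :
    Matrix (Fin 2 × Fin n × Fin n) (Fin 2 × Fin n × Fin n) ℂ :=
  fun p q => if p.2 = q.2 then μ p.1 * star (μ q.1) else 0

/-!
The controlled swap sends `ν ⊗ ψ ⊗ φ` to `α |0⟩ ⊗ ψ ⊗ φ + β |1⟩ ⊗ φ ⊗ ψ`. Projecting the third
factor onto `χ` and the first onto `μ` leaves the product vector `μ ⊗ w ⊗ χ` with
`w = C (√c₁ α ⟨χ|φ⟩ ψ + √c₂ β ⟨χ|ψ⟩ φ)`, and tracing out the unit vectors `μ` and `χ` gives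
`|w⟩⟨w|`. Since `√c₁ = |⟨χ|ψ⟩|` and `√c₂ = |⟨χ|φ⟩|`, `w = C √(c₁ c₂) Ψ`, so
`t = c₁ c₂ / (c₁ + c₂)`.
-/

def tensor3 {n : ℕ} (a : Fin 2 → ℂ) (b c : Fin n → ℂ) : Fin 2 × Fin n × Fin n → ℂ :=
  fun p => a p.1 * b p.2.1 * c p.2.2

section tensor3

variable {n : ℕ}

lemma cswap_mulVec_tensor3 (a : Fin 2 → ℂ) (b c : Fin n → ℂ) :
    cswap n *ᵥ tensor3 a b c
      = tensor3 (Pi.single 0 (a 0)) b c + tensor3 (Pi.single 1 (a 1)) c b := by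
  funext ⟨i, j, k⟩
  fin_cases i <;>
    simp only [mulVec, dotProduct, cswap, tensor3, Fin.zero_eta, Fin.mk_one, Fin.isValue,
      one_ne_zero, zero_ne_one, ↓reduceIte, ite_and, ite_mul, one_mul, zero_mul,
      Fintype.sum_prod_type, Finset.sum_ite_irrel, Finset.sum_ite_eq, Finset.mem_univ,
      Finset.sum_const_zero, Pi.add_apply, Pi.single_eq_same, ne_eq, not_false_eq_true,
      Pi.single_eq_of_ne, add_zero, zero_add]
  ring

lemma projThird_mulVec_tensor3 (χ : Fin n → ℂ) (a : Fin 2 → ℂ) (b c : Fin n → ℂ) :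
    projThird χ *ᵥ tensor3 a b c = (star χ ⬝ᵥ c) • tensor3 a b χ := by
  funext ⟨i, j, k⟩
  simp only [mulVec, dotProduct, projThird, tensor3, ite_and, ite_mul, zero_mul,
    Fintype.sum_prod_type, Finset.sum_ite_irrel, Finset.sum_const_zero, Finset.sum_ite_eq,
    Finset.mem_univ, ↓reduceIte, Pi.star_apply, Pi.smul_apply, smul_eq_mul, Finset.sum_mul]
  exact Finset.sum_congr rfl fun _ _ => by ring

lemma projFirst_mulVec_tensor3 (μ a : Fin 2 → ℂ) (b c : Fin n → ℂ) :
    projFirst μ *ᵥ tensor3 a b c = (star μ ⬝ᵥ a) • tensor3 μ b c := by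
  funext ⟨i, j, k⟩
  simp only [mulVec, dotProduct, projFirst, tensor3, ite_mul, zero_mul, Fintype.sum_prod_type,
    Finset.sum_ite_eq, Finset.mem_univ, ↓reduceIte, Fin.sum_univ_two, Pi.star_apply,
    Pi.smul_apply, smul_eq_mul]
  ring

lemma projFirst_mul_projThird_mul_cswap_mulVec_tensor3 (μ a : Fin 2 → ℂ)
    (χ b c : Fin n → ℂ) :
    (projFirst μ * projThird χ * cswap n) *ᵥ tensor3 a b c
      = tensor3 μ (fun i => star (μ 0) * a 0 * (star χ ⬝ᵥ c) * b i
          + star (μ 1) * a 1 * (star χ ⬝ᵥ b) * c i) χ := by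
  rw [← mulVec_mulVec, ← mulVec_mulVec, cswap_mulVec_tensor3, mulVec_add, mulVec_add,
    projThird_mulVec_tensor3, projThird_mulVec_tensor3, mulVec_smul, mulVec_smul,
    projFirst_mulVec_tensor3, projFirst_mulVec_tensor3]
  funext ⟨i, j, k⟩
  simp only [dotProduct_single, Pi.star_apply, Pi.add_apply, Pi.smul_apply, tensor3, smul_eq_mul]
  ring

lemma ptrace13_vecMulVec_tensor3 (a : Fin 2 → ℂ) (b c : Fin n → ℂ) :
    ptrace13 (vecMulVec (tensor3 a b c) (star (tensor3 a b c)))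
      = ((star a ⬝ᵥ a) * (star c ⬝ᵥ c)) • vecMulVec b (star b) := by
  ext i j
  simp only [ptrace13, tensor3, vecMulVec_apply, Pi.star_apply, star_mul', Matrix.smul_apply,
    smul_eq_mul, dotProduct, Finset.mul_sum, Finset.sum_mul]
  rw [Finset.sum_comm]
  exact Finset.sum_congr rfl fun _ _ => Finset.sum_congr rfl fun _ _ => by ring

end tensor3

noncomputable def sqrtWeightVec (c₁ c₂ : ℝ) : Fin 2 → ℂ :=
  fun a => ((Real.sqrt (c₁ + c₂))⁻¹ : ℂ) * ![(Real.sqrt c₁ : ℂ), (Real.sqrt c₂ : ℂ)] a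

lemma star_sqrtWeightVec_dotProduct_self {c₁ c₂ : ℝ} (hc₁ : 0 ≤ c₁) (hc₂ : 0 ≤ c₂)
    (hc : 0 < c₁ + c₂) : star (sqrtWeightVec c₁ c₂) ⬝ᵥ sqrtWeightVec c₁ c₂ = 1 := by
  simp only [sqrtWeightVec, dotProduct, Fin.sum_univ_two, Pi.star_apply, star_mul', star_inv₀,
    RCLike.star_def, Complex.conj_ofReal, cons_val_zero, cons_val_one, cons_val_fin_one]
  field_simp
  norm_cast
  rw [Real.sq_sqrt hc₁, Real.sq_sqrt hc₂, Real.sq_sqrt hc.le, div_self hc.ne']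

theorem superposition_protocol_general {n : ℕ}
    (χ ψ φ : Fin n → ℂ)
    (hχ : star χ ⬝ᵥ χ = 1)
    (c₁ c₂ : ℝ) (hc₁ : 0 < c₁) (hc₂ : 0 < c₂)
    (hover₁ : ‖star χ ⬝ᵥ ψ‖ ^ 2 = c₁)
    (hover₂ : ‖star χ ⬝ᵥ φ‖ ^ 2 = c₂)
    (α β : ℂ) :
    ∃ t : ℝ, 0 < t ∧
      ptrace13
        ((projFirst (fun a => ((Real.sqrt (c₁ + c₂))⁻¹ : ℂ) *
              ![(Real.sqrt c₁ : ℂ), (Real.sqrt c₂ : ℂ)] a) *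
            projThird χ * cswap n) *
          vecMulVec (fun p => ![α, β] p.1 * ψ p.2.1 * φ p.2.2)
            (star fun p => ![α, β] p.1 * ψ p.2.1 * φ p.2.2) *
          (projFirst (fun a => ((Real.sqrt (c₁ + c₂))⁻¹ : ℂ) *
              ![(Real.sqrt c₁ : ℂ), (Real.sqrt c₂ : ℂ)] a) *
            projThird χ * cswap n)ᴴ)
      = (t : ℂ) • vecMulVec
          (fun i => α * ((star χ ⬝ᵥ φ) / (‖star χ ⬝ᵥ φ‖ : ℂ)) * ψ i
            + β * ((star χ ⬝ᵥ ψ) / (‖star χ ⬝ᵥ ψ‖ : ℂ)) * φ i)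
          (star fun i => α * ((star χ ⬝ᵥ φ) / (‖star χ ⬝ᵥ φ‖ : ℂ)) * ψ i
            + β * ((star χ ⬝ᵥ ψ) / (‖star χ ⬝ᵥ ψ‖ : ℂ)) * φ i) := by
  rw [show (fun a => ((Real.sqrt (c₁ + c₂))⁻¹ : ℂ) *
        ![(Real.sqrt c₁ : ℂ), (Real.sqrt c₂ : ℂ)] a) = sqrtWeightVec c₁ c₂ from rfl,
    show (fun p => ![α, β] p.1 * ψ p.2.1 * φ p.2.2) = tensor3 ![α, β] ψ φ from rfl]
  set Ψ : Fin n → ℂ := fun i => α * ((star χ ⬝ᵥ φ) / (‖star χ ⬝ᵥ φ‖ : ℂ)) * ψ i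
    + β * ((star χ ⬝ᵥ ψ) / (‖star χ ⬝ᵥ ψ‖ : ℂ)) * φ i
  set r : ℝ := (Real.sqrt (c₁ + c₂))⁻¹ * Real.sqrt c₁ * Real.sqrt c₂
  have habs₁ : ‖star χ ⬝ᵥ ψ‖ = Real.sqrt c₁ := by
    rw [← hover₁, Real.sqrt_sq (norm_nonneg _)]
  have habs₂ : ‖star χ ⬝ᵥ φ‖ = Real.sqrt c₂ := by
    rw [← hover₂, Real.sqrt_sq (norm_nonneg _)]
  have hw : (fun i => star (sqrtWeightVec c₁ c₂ 0) * ![α, β] 0 * (star χ ⬝ᵥ φ) * ψ i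
      + star (sqrtWeightVec c₁ c₂ 1) * ![α, β] 1 * (star χ ⬝ᵥ ψ) * φ i) = (r : ℂ) • Ψ := by
    have hs₁ : (Real.sqrt c₁ : ℂ) ≠ 0 := by simp [hc₁.ne', hc₁.le]
    have hs₂ : (Real.sqrt c₂ : ℂ) ≠ 0 := by simp [hc₂.ne', hc₂.le]
    funext i
    simp only [sqrtWeightVec, Ψ, r, habs₁, habs₂, cons_val_zero, cons_val_one, cons_val_fin_one,
      star_mul', star_inv₀, RCLike.star_def, Complex.conj_ofReal, Complex.ofReal_mul,
      Complex.ofReal_inv, Pi.smul_apply, smul_eq_mul]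
    field_simp
  refine ⟨r ^ 2, by positivity, ?_⟩
  rw [mul_vecMulVec, vecMulVec_mul, ← star_mulVec,
    projFirst_mul_projThird_mul_cswap_mulVec_tensor3, ptrace13_vecMulVec_tensor3,
    star_sqrtWeightVec_dotProduct_self hc₁.le hc₂.le (by positivity), hχ, one_mul, one_smul, hw,
    star_smul, smul_vecMulVec, vecMulVec_smul, smul_smul, Complex.star_def, Complex.conj_ofReal,
    Complex.ofReal_pow, sq]

/-- The superposition protocol `Λ_sup(ρ) = tr₁₃(V₃V₂V₁ ρ (V₃V₂V₁)ᴴ)` maps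
`P_ν⊗P_ψ⊗P_φ` (with `ν = α|0⟩+β|1⟩`, `|⟨χ|ψ⟩|² = c₁`, `|⟨χ|φ⟩|² = c₂`) to a
positive multiple of `|Ψ⟩⟨Ψ|`, `Ψ = α(⟨χ|φ⟩/|⟨χ|φ⟩|)ψ + β(⟨χ|ψ⟩/|⟨χ|ψ⟩|)φ`. -/
theorem superposition_protocol {n : ℕ}
    (χ ψ φ : Fin n → ℂ)
    (hχ : star χ ⬝ᵥ χ = 1) (hψ : star ψ ⬝ᵥ ψ = 1) (hφ : star φ ⬝ᵥ φ = 1)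
    (c₁ c₂ : ℝ) (hc₁ : 0 < c₁) (hc₁' : c₁ ≤ 1) (hc₂ : 0 < c₂) (hc₂' : c₂ ≤ 1)
    (hover₁ : ‖star χ ⬝ᵥ ψ‖ ^ 2 = c₁)
    (hover₂ : ‖star χ ⬝ᵥ φ‖ ^ 2 = c₂)
    (α β : ℂ) (hν : ‖α‖ ^ 2 + ‖β‖ ^ 2 = 1) :
    ∃ t : ℝ, 0 < t ∧
      ptrace13
        ((projFirst (fun a => ((Real.sqrt (c₁ + c₂))⁻¹ : ℂ) *
              ![(Real.sqrt c₁ : ℂ), (Real.sqrt c₂ : ℂ)] a) *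
            projThird χ * cswap n) *
          vecMulVec (fun p => ![α, β] p.1 * ψ p.2.1 * φ p.2.2)
            (star fun p => ![α, β] p.1 * ψ p.2.1 * φ p.2.2) *
          (projFirst (fun a => ((Real.sqrt (c₁ + c₂))⁻¹ : ℂ) *
              ![(Real.sqrt c₁ : ℂ), (Real.sqrt c₂ : ℂ)] a) *
            projThird χ * cswap n)ᴴ)
      = (t : ℂ) • vecMulVec
          (fun i => α * ((star χ ⬝ᵥ φ) / (‖star χ ⬝ᵥ φ‖ : ℂ)) * ψ i
            + β * ((star χ ⬝ᵥ ψ) / (‖star χ ⬝ᵥ ψ‖ : ℂ)) * φ i)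
          (star fun i => α * ((star χ ⬝ᵥ φ) / (‖star χ ⬝ᵥ φ‖ : ℂ)) * ψ i
            + β * ((star χ ⬝ᵥ ψ) / (‖star χ ⬝ᵥ ψ‖ : ℂ)) * φ i) :=
  superposition_protocol_general χ ψ φ hχ c₁ c₂ hc₁ hc₂ hover₁ hover₂ α β
end

section
/- With the protocol Λ_sup as above, the success probability is tr[Λ_sup(P_ν⊗P_ψ⊗P_φ)] = (c₁c₂/(c₁+c₂))·‖Ψ‖², where ‖Ψ‖² = 1 + 2Re(ᾱβ·tr(P_χP_ψP_φ)/(√c₁√c₂)). -/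
open Matrix

/-!
The circuit maps the product vector `ν ⊗ ψ ⊗ φ` to the product vector `μ ⊗ z ⊗ χ` with
`z = μ̄₀ α ⟨χ|φ⟩ ψ + μ̄₁ β ⟨χ|ψ⟩ φ`: the controlled swap leaves the branch `|0⟩` alone and swaps
`ψ, φ` in the branch `|1⟩`, `|χ⟩⟨χ|` on the third factor turns each branch into an overlap times
`χ`, and `|μ⟩⟨μ|` merges the two branches. Since `μ` and `χ` are unit vectors the success
probability is `‖z‖²`; the diagonal terms of `‖z‖²` add up to `c₁c₂/(c₁+c₂)` because
`|⟨χ|ψ⟩|² = c₁`, `|⟨χ|φ⟩|² = c₂` and `|α|² + |β|² = 1`, and the cross terms give the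
interference term `2 Re(ᾱβ⟨χ|ψ⟩⟨ψ|φ⟩⟨φ|χ⟩) √c₁√c₂/(c₁+c₂)`.
-/

section ProductVector

variable {R ι κ τ : Type*} [CommSemiring R]

def prodVec (u : ι → R) (v : κ → R) (w : τ → R) : ι × κ × τ → R :=
  fun p => u p.1 * v p.2.1 * w p.2.2

lemma star_prodVec [StarRing R] (u : ι → R) (v : κ → R) (w : τ → R) :
    star (prodVec u v w) = prodVec (star u) (star v) (star w) := by
  funext p
  simp only [prodVec, Pi.star_apply, star_mul']

lemma prodVec_dotProduct [Fintype ι] [Fintype κ] [Fintype τ]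
    (u u' : ι → R) (v v' : κ → R) (w w' : τ → R) :
    prodVec u v w ⬝ᵥ prodVec u' v' w' = (u ⬝ᵥ u') * (v ⬝ᵥ v') * (w ⬝ᵥ w') := by
  have regroup (a : ι) (b : κ) (c : τ) : u a * v b * w c * (u' a * v' b * w' c)
      = u a * u' a * (v b * v' b * (w c * w' c)) := by ring
  rw [mul_assoc]
  simp only [dotProduct, prodVec, Fintype.sum_prod_type, regroup, ← Finset.mul_sum,
    ← Finset.sum_mul]

lemma prodVec_add_middle (u : ι → R) (v v' : κ → R) (w : τ → R) :
    prodVec u (v + v') w = prodVec u v w + prodVec u v' w := by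
  funext p
  simp only [prodVec, Pi.add_apply]
  ring

lemma prodVec_smul_middle (c : R) (u : ι → R) (v : κ → R) (w : τ → R) :
    prodVec u (c • v) w = c • prodVec u v w := by
  funext p
  simp only [prodVec, Pi.smul_apply, smul_eq_mul]
  ring

end ProductVector

lemma trace_ptrace13 {n : ℕ} (M : Matrix (Fin 2 × Fin n × Fin n) (Fin 2 × Fin n × Fin n) ℂ) :
    (ptrace13 M).trace = M.trace := by
  simp only [ptrace13, Matrix.trace, Matrix.diag, Fintype.sum_prod_type]
  exact Finset.sum_comm

section Operators

variable {n : ℕ}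

lemma cswap_mulVec_prodVec (ν : Fin 2 → ℂ) (ψ φ : Fin n → ℂ) :
    cswap n *ᵥ prodVec ν ψ φ = prodVec ![ν 0, 0] ψ φ + prodVec ![0, ν 1] φ ψ := by
  funext ⟨a, i, j⟩
  simp only [mulVec, dotProduct, cswap, prodVec, Fintype.sum_prod_type, Fin.sum_univ_two,
    Pi.add_apply]
  fin_cases a
  · simp [ite_and]
  · simp [ite_and]
    ring

lemma projThird_mulVec_prodVec (χ : Fin n → ℂ) (u : Fin 2 → ℂ) (v w : Fin n → ℂ) :
    projThird χ *ᵥ prodVec u v w = (star χ ⬝ᵥ w) • prodVec u v χ := by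
  funext ⟨a, i, j⟩
  simp only [mulVec, dotProduct, projThird, prodVec, Fintype.sum_prod_type, Fin.sum_univ_two,
    Pi.smul_apply, smul_eq_mul, Pi.star_apply]
  fin_cases a <;> simp [Finset.sum_mul] <;> exact Finset.sum_congr rfl fun _ _ => by ring

lemma projFirst_mulVec_prodVec (μ u : Fin 2 → ℂ) (v w : Fin n → ℂ) :
    projFirst μ *ᵥ prodVec u v w = (star μ ⬝ᵥ u) • prodVec μ v w := by
  funext ⟨a, i, j⟩
  simp only [mulVec, dotProduct, projFirst, prodVec, Fintype.sum_prod_type, Pi.smul_apply,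
    smul_eq_mul, Pi.star_apply]
  simp [Prod.ext_iff, ite_and]
  ring

end Operators

lemma superposition_mulVec_prodVec {n : ℕ} (μ ν : Fin 2 → ℂ) (χ ψ φ : Fin n → ℂ) :
    (projFirst μ * projThird χ * cswap n) *ᵥ prodVec ν ψ φ
      = prodVec μ ((star (μ 0) * ν 0 * (star χ ⬝ᵥ φ)) • ψ
          + (star (μ 1) * ν 1 * (star χ ⬝ᵥ ψ)) • φ) χ := by
  rw [← mulVec_mulVec, ← mulVec_mulVec, cswap_mulVec_prodVec, mulVec_add,
    projThird_mulVec_prodVec, projThird_mulVec_prodVec, mulVec_add, mulVec_smul, mulVec_smul,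
    projFirst_mulVec_prodVec, projFirst_mulVec_prodVec, smul_smul, smul_smul,
    prodVec_add_middle, prodVec_smul_middle, prodVec_smul_middle]
  simp [dotProduct, Fin.sum_univ_two, mul_comm]

lemma star_add_smul_dotProduct {R ι : Type*} [CommRing R] [StarRing R] [Fintype ι]
    (t s : R) (ψ φ : ι → R) :
    star (t • ψ + s • φ) ⬝ᵥ (t • ψ + s • φ)
      = star t * t * (star ψ ⬝ᵥ ψ) + star s * s * (star φ ⬝ᵥ φ)
        + star t * s * (star ψ ⬝ᵥ φ) + star s * t * (star φ ⬝ᵥ ψ) := by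
  simp only [star_add, star_smul, add_dotProduct, dotProduct_add, smul_dotProduct,
    dotProduct_smul, smul_eq_mul]
  ring

lemma superposed_amplitudes_normSq {c₁ c₂ : ℝ} (hc₁ : 0 < c₁) (hc₂ : 0 < c₂)
    {α β A B D t s : ℂ} (hA : ‖A‖ ^ 2 = c₁) (hB : ‖B‖ ^ 2 = c₂) (hν : ‖α‖ ^ 2 + ‖β‖ ^ 2 = 1)
    (ht : t = ((√c₁ / √(c₁ + c₂) : ℝ) : ℂ) * α * B)
    (hs : s = ((√c₂ / √(c₁ + c₂) : ℝ) : ℂ) * β * A) :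
    star t * t + star s * s + star t * s * D + star s * t * star D
      = ((c₁ * c₂ / (c₁ + c₂) *
          (1 + 2 * (starRingEnd ℂ α * β * (A * D * star B) / ((√c₁ : ℂ) * (√c₂ : ℂ))).re) : ℝ)
        : ℂ) := by
  set k : ℝ := c₁ * c₂ / (c₁ + c₂)
  set w : ℂ := starRingEnd ℂ α * β * (A * D * star B) / ((√c₁ : ℂ) * (√c₂ : ℂ))
  have hsum : 0 < c₁ + c₂ := add_pos hc₁ hc₂
  have hnorm : star t * t + star s * s = k := by
    have : ‖t‖ ^ 2 + ‖s‖ ^ 2 = k := by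
      simp only [ht, hs, norm_mul, Complex.norm_real, Real.norm_eq_abs, mul_pow, sq_abs,
        div_pow, Real.sq_sqrt hc₁.le, Real.sq_sqrt hc₂.le, Real.sq_sqrt hsum.le, hA, hB, k]
      field_simp
      linear_combination hν
    simp only [Complex.star_def, Complex.conj_mul']
    exact_mod_cast this
  have hcross : star t * s * D = k * w := by
    have hx : (c₁ : ℂ) = (√c₁ : ℂ) ^ 2 := by rw [← Complex.ofReal_pow, Real.sq_sqrt hc₁.le]
    have hy : (c₂ : ℂ) = (√c₂ : ℂ) ^ 2 := by rw [← Complex.ofReal_pow, Real.sq_sqrt hc₂.le]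
    have hr : (c₁ : ℂ) + c₂ = (√(c₁ + c₂) : ℂ) ^ 2 := by
      rw [← Complex.ofReal_pow, Real.sq_sqrt hsum.le]; push_cast; ring
    have hx0 : (√c₁ : ℂ) ≠ 0 := by exact_mod_cast (Real.sqrt_pos.2 hc₁).ne'
    have hy0 : (√c₂ : ℂ) ≠ 0 := by exact_mod_cast (Real.sqrt_pos.2 hc₂).ne'
    have hr0 : (√(c₁ + c₂) : ℂ) ≠ 0 := by exact_mod_cast (Real.sqrt_pos.2 hsum).ne'
    simp only [ht, hs, w, k, star_mul', Complex.star_def, Complex.conj_ofReal]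
    push_cast
    rw [hr, hx, hy]
    field_simp
  calc star t * t + star s * s + star t * s * D + star s * t * star D
      = (star t * t + star s * s) + (star t * s * D + star (star t * s * D)) := by
        simp only [star_mul', star_star]; ring
    _ = k + (k * w + star (k * w)) := by rw [hnorm, hcross]
    _ = ((k * (1 + 2 * w.re) : ℝ) : ℂ) := by
        rw [star_mul', Complex.star_def, Complex.conj_ofReal]
        push_cast
        rw [Complex.re_eq_add_conj]
        ring

theorem superposition_protocol_success_probability_general {n : ℕ}
    (χ ψ φ : Fin n → ℂ)
    (hχ : star χ ⬝ᵥ χ = 1) (hψ : star ψ ⬝ᵥ ψ = 1) (hφ : star φ ⬝ᵥ φ = 1)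
    (c₁ c₂ : ℝ) (hc₁ : 0 < c₁) (hc₂ : 0 < c₂)
    (hover₁ : ‖star χ ⬝ᵥ ψ‖ ^ 2 = c₁)
    (hover₂ : ‖star χ ⬝ᵥ φ‖ ^ 2 = c₂)
    (α β : ℂ) (hν : ‖α‖ ^ 2 + ‖β‖ ^ 2 = 1) :
    (ptrace13
        ((projFirst (fun a => ((Real.sqrt (c₁ + c₂))⁻¹ : ℂ) *
              ![(Real.sqrt c₁ : ℂ), (Real.sqrt c₂ : ℂ)] a) *
            projThird χ * cswap n) *
          vecMulVec (fun p => ![α, β] p.1 * ψ p.2.1 * φ p.2.2)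
            (star fun p => ![α, β] p.1 * ψ p.2.1 * φ p.2.2) *
          (projFirst (fun a => ((Real.sqrt (c₁ + c₂))⁻¹ : ℂ) *
              ![(Real.sqrt c₁ : ℂ), (Real.sqrt c₂ : ℂ)] a) *
            projThird χ * cswap n)ᴴ)).trace
      = (((c₁ * c₂ / (c₁ + c₂)) *
          (1 + 2 * (starRingEnd ℂ α * β *
              ((star χ ⬝ᵥ ψ) * (star ψ ⬝ᵥ φ) * (star φ ⬝ᵥ χ))
              / ((Real.sqrt c₁ : ℂ) * (Real.sqrt c₂ : ℂ))).re) : ℝ) : ℂ) := by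
  set μ : Fin 2 → ℂ := fun a => ((Real.sqrt (c₁ + c₂))⁻¹ : ℂ) *
      ![(Real.sqrt c₁ : ℂ), (Real.sqrt c₂ : ℂ)] a
  have hμ₀ : μ 0 = ((√c₁ / √(c₁ + c₂) : ℝ) : ℂ) := by simp [μ, div_eq_inv_mul]
  have hμ₁ : μ 1 = ((√c₂ / √(c₁ + c₂) : ℝ) : ℂ) := by simp [μ, div_eq_inv_mul]
  have hμ : star μ ⬝ᵥ μ = 1 := by
    have hsum : 0 < c₁ + c₂ := add_pos hc₁ hc₂
    have : (√c₁ / √(c₁ + c₂)) ^ 2 + (√c₂ / √(c₁ + c₂)) ^ 2 = 1 := by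
      rw [div_pow, div_pow, Real.sq_sqrt hc₁.le, Real.sq_sqrt hc₂.le, Real.sq_sqrt hsum.le]
      field_simp
    simp only [dotProduct, Fin.sum_univ_two, Pi.star_apply, hμ₀, hμ₁, Complex.star_def,
      Complex.conj_ofReal, ← sq]
    exact_mod_cast this
  rw [mul_vecMulVec, vecMulVec_mul, ← star_mulVec, trace_ptrace13, trace_vecMulVec,
    dotProduct_comm]
  rw [show (fun p => ![α, β] p.1 * ψ p.2.1 * φ p.2.2) = prodVec ![α, β] ψ φ from rfl,
    superposition_mulVec_prodVec, star_prodVec, prodVec_dotProduct, hμ, hχ, one_mul, mul_one]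
  rw [star_add_smul_dotProduct, hψ, hφ, mul_one, mul_one, star_dotProduct φ ψ,
    star_dotProduct φ χ]
  exact superposed_amplitudes_normSq hc₁ hc₂ hover₁ hover₂ hν (by simp [hμ₀]) (by simp [hμ₁])

/-- Success probability of the superposition protocol:
`tr[Λ_sup(P_ν⊗P_ψ⊗P_φ)] = (c₁c₂/(c₁+c₂))·(1 + 2Re(ᾱβ tr(P_χP_ψP_φ)/(√c₁√c₂)))`. -/
theorem superposition_protocol_success_probability {n : ℕ}
    (χ ψ φ : Fin n → ℂ)
    (hχ : star χ ⬝ᵥ χ = 1) (hψ : star ψ ⬝ᵥ ψ = 1) (hφ : star φ ⬝ᵥ φ = 1)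
    (c₁ c₂ : ℝ) (hc₁ : 0 < c₁) (hc₁' : c₁ ≤ 1) (hc₂ : 0 < c₂) (hc₂' : c₂ ≤ 1)
    (hover₁ : ‖star χ ⬝ᵥ ψ‖ ^ 2 = c₁)
    (hover₂ : ‖star χ ⬝ᵥ φ‖ ^ 2 = c₂)
    (α β : ℂ) (hν : ‖α‖ ^ 2 + ‖β‖ ^ 2 = 1) :
    (ptrace13
        ((projFirst (fun a => ((Real.sqrt (c₁ + c₂))⁻¹ : ℂ) *
              ![(Real.sqrt c₁ : ℂ), (Real.sqrt c₂ : ℂ)] a) *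
            projThird χ * cswap n) *
          vecMulVec (fun p => ![α, β] p.1 * ψ p.2.1 * φ p.2.2)
            (star fun p => ![α, β] p.1 * ψ p.2.1 * φ p.2.2) *
          (projFirst (fun a => ((Real.sqrt (c₁ + c₂))⁻¹ : ℂ) *
              ![(Real.sqrt c₁ : ℂ), (Real.sqrt c₂ : ℂ)] a) *
            projThird χ * cswap n)ᴴ)).trace
      = (((c₁ * c₂ / (c₁ + c₂)) *
          (1 + 2 * (starRingEnd ℂ α * β *
              ((star χ ⬝ᵥ ψ) * (star ψ ⬝ᵥ φ) * (star φ ⬝ᵥ χ))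
              / ((Real.sqrt c₁ : ℂ) * (Real.sqrt c₂ : ℂ))).re) : ℝ) : ℂ) :=
  superposition_protocol_success_probability_general χ ψ φ hχ hψ hφ c₁ c₂ hc₁ hc₂ hover₁ hover₂ α β
    hν
end

section
/- Let χ be a unit vector in H and let ψ = (1/√2)(χ + ψ⊥), φ = (1/√2)(χ + φ⊥) where ψ⊥, φ⊥ are unit vectors orthogonal to χ. Then with α = β = 1/√2 and c₁ = c₂ = 1/2, the superposition vector Ψ = α(⟨χ|φ⟩/|⟨χ|φ⟩|)ψ + β(⟨χ|ψ⟩/|⟨χ|ψ⟩|)φ is proportional to χ + (1/2)(ψ⊥ + φ⊥), and the success probability (c₁c₂/(c₁+c₂))‖Ψ‖² equals (1/4)(1 + (1/4)‖ψ⊥+φ⊥‖²), which is at least 1/4. -/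
/-!
Since `χ` is a unit vector orthogonal to `ψ⊥` and `φ⊥`, both overlaps `⟨χ|ψ⟩` and `⟨χ|φ⟩` equal
the positive real `1/√2`, so both phases are `1` and `Ψ = (ψ + φ)/√2 = χ + (ψ⊥ + φ⊥)/2`.
Pythagoras then gives `‖Ψ‖² = 1 + ‖ψ⊥ + φ⊥‖²/4`, and the prefactor `c₁c₂/(c₁+c₂)` is `1/4`.
-/

section InnerProductSpace

variable {𝕜 E : Type*} [RCLike 𝕜] [NormedAddCommGroup E] [InnerProductSpace 𝕜 E]

theorem inner_smul_add_of_inner_eq_zero {χ v : E} (hχ : ‖χ‖ = 1) (hv : inner 𝕜 χ v = 0)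
    (a : 𝕜) : inner 𝕜 χ (a • (χ + v)) = a := by
  rw [inner_smul_right, inner_add_right, inner_self_eq_norm_sq_to_K, hχ, hv]
  simp

theorem norm_add_smul_sq_of_inner_eq_zero {χ w : E} (hw : inner 𝕜 χ w = 0) (c : 𝕜) :
    ‖χ + c • w‖ ^ 2 = ‖χ‖ ^ 2 + ‖c‖ ^ 2 * ‖w‖ ^ 2 := by
  have hcw : inner 𝕜 χ (c • w) = 0 := by rw [inner_smul_right, hw, mul_zero]
  rw [sq, sq, norm_add_sq_eq_norm_sq_add_norm_sq_of_inner_eq_zero _ _ hcw, norm_smul]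
  ring

end InnerProductSpace

theorem Complex.ofReal_div_norm_ofReal {r : ℝ} (hr : 0 < r) : (r : ℂ) / (‖(r : ℂ)‖ : ℂ) = 1 := by
  rw [Complex.norm_real, Real.norm_of_nonneg hr.le, div_self (Complex.ofReal_ne_zero.2 hr.ne')]

theorem encoded_superposition_of_computations_general
    {H : Type*} [NormedAddCommGroup H] [InnerProductSpace ℂ H]
    (χ ψp φp : H) (hχ : ‖χ‖ = 1)
    (hψo : (inner ℂ χ ψp : ℂ) = 0) (hφo : (inner ℂ χ φp : ℂ) = 0)
    (ψ φ : H)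
    (hψ : ψ = ((Real.sqrt 2 : ℂ))⁻¹ • (χ + ψp))
    (hφ : φ = ((Real.sqrt 2 : ℂ))⁻¹ • (χ + φp)) :
    (∃ c : ℂ, c ≠ 0 ∧
        (((Real.sqrt 2 : ℂ))⁻¹ * ((inner ℂ χ φ : ℂ) / (‖(inner ℂ χ φ : ℂ)‖ : ℂ))) • ψ
          + (((Real.sqrt 2 : ℂ))⁻¹ * ((inner ℂ χ ψ : ℂ) / (‖(inner ℂ χ ψ : ℂ)‖ : ℂ))) • φ
        = c • (χ + (2 : ℂ)⁻¹ • (ψp + φp)))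
    ∧ ((1 / 2 * (1 / 2) / (1 / 2 + 1 / 2)) *
        ‖(((Real.sqrt 2 : ℂ))⁻¹ * ((inner ℂ χ φ : ℂ) / (‖(inner ℂ χ φ : ℂ)‖ : ℂ))) • ψ
          + (((Real.sqrt 2 : ℂ))⁻¹ * ((inner ℂ χ ψ : ℂ) / (‖(inner ℂ χ ψ : ℂ)‖ : ℂ))) • φ‖ ^ 2
        = 1 / 4 * (1 + 1 / 4 * ‖ψp + φp‖ ^ 2))
    ∧ (1 / 4 : ℝ) ≤ (1 / 2 * (1 / 2) / (1 / 2 + 1 / 2)) *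
        ‖(((Real.sqrt 2 : ℂ))⁻¹ * ((inner ℂ χ φ : ℂ) / (‖(inner ℂ χ φ : ℂ)‖ : ℂ))) • ψ
          + (((Real.sqrt 2 : ℂ))⁻¹ * ((inner ℂ χ ψ : ℂ) / (‖(inner ℂ χ ψ : ℂ)‖ : ℂ))) • φ‖ ^ 2 := by
  have hphase : ∀ v : H, inner ℂ χ v = 0 →
      inner ℂ χ (((Real.sqrt 2 : ℂ))⁻¹ • (χ + v)) /
        (‖inner ℂ χ (((Real.sqrt 2 : ℂ))⁻¹ • (χ + v))‖ : ℂ) = 1 := fun v hv => by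
    rw [inner_smul_add_of_inner_eq_zero hχ hv, ← Complex.ofReal_inv]
    exact Complex.ofReal_div_norm_ofReal (by positivity)
  have hsq : ((Real.sqrt 2 : ℂ))⁻¹ * ((Real.sqrt 2 : ℂ))⁻¹ = (2 : ℂ)⁻¹ := by
    rw [← mul_inv, ← Complex.ofReal_mul, Real.mul_self_sqrt zero_le_two, Complex.ofReal_ofNat]
  have hΨ : (((Real.sqrt 2 : ℂ))⁻¹ * ((inner ℂ χ φ : ℂ) / (‖(inner ℂ χ φ : ℂ)‖ : ℂ))) • ψ
        + (((Real.sqrt 2 : ℂ))⁻¹ * ((inner ℂ χ ψ : ℂ) / (‖(inner ℂ χ ψ : ℂ)‖ : ℂ))) • φ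
      = χ + (2 : ℂ)⁻¹ • (ψp + φp) := by
    subst hψ hφ
    rw [hphase ψp hψo, hphase φp hφo, mul_one, smul_smul, smul_smul, hsq]
    module
  have hnorm : ‖χ + (2 : ℂ)⁻¹ • (ψp + φp)‖ ^ 2 = 1 + 1 / 4 * ‖ψp + φp‖ ^ 2 := by
    rw [norm_add_smul_sq_of_inner_eq_zero (by rw [inner_add_right, hψo, hφo, add_zero]), hχ]
    norm_num
  refine ⟨⟨1, one_ne_zero, by rw [hΨ, one_smul]⟩, ?_, ?_⟩
  · rw [hΨ, hnorm]
    ring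
  · rw [hΨ, hnorm]
    nlinarith [sq_nonneg ‖ψp + φp‖]

/-- Encoding computation results: for `ψ = (χ+ψ⊥)/√2`, `φ = (χ+φ⊥)/√2` with
`ψ⊥, φ⊥ ⊥ χ` unit, and `α = β = 1/√2` (so `c₁ = c₂ = 1/2`), the superposition
`Ψ = α(⟨χ|φ⟩/|⟨χ|φ⟩|)ψ + β(⟨χ|ψ⟩/|⟨χ|ψ⟩|)φ` is proportional to
`χ + (ψ⊥+φ⊥)/2`, and the success probability `(c₁c₂/(c₁+c₂))‖Ψ‖²` equals
`(1/4)(1 + ‖ψ⊥+φ⊥‖²/4) ≥ 1/4`. -/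
theorem encoded_superposition_of_computations
    {H : Type*} [NormedAddCommGroup H] [InnerProductSpace ℂ H]
    (χ ψp φp : H) (hχ : ‖χ‖ = 1) (hψp : ‖ψp‖ = 1) (hφp : ‖φp‖ = 1)
    (hψo : (inner ℂ χ ψp : ℂ) = 0) (hφo : (inner ℂ χ φp : ℂ) = 0)
    (ψ φ : H)
    (hψ : ψ = ((Real.sqrt 2 : ℂ))⁻¹ • (χ + ψp))
    (hφ : φ = ((Real.sqrt 2 : ℂ))⁻¹ • (χ + φp)) :
    (∃ c : ℂ, c ≠ 0 ∧
        (((Real.sqrt 2 : ℂ))⁻¹ * ((inner ℂ χ φ : ℂ) / (‖(inner ℂ χ φ : ℂ)‖ : ℂ))) • ψ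
          + (((Real.sqrt 2 : ℂ))⁻¹ * ((inner ℂ χ ψ : ℂ) / (‖(inner ℂ χ ψ : ℂ)‖ : ℂ))) • φ
        = c • (χ + (2 : ℂ)⁻¹ • (ψp + φp)))
    ∧ ((1 / 2 * (1 / 2) / (1 / 2 + 1 / 2)) *
        ‖(((Real.sqrt 2 : ℂ))⁻¹ * ((inner ℂ χ φ : ℂ) / (‖(inner ℂ χ φ : ℂ)‖ : ℂ))) • ψ
          + (((Real.sqrt 2 : ℂ))⁻¹ * ((inner ℂ χ ψ : ℂ) / (‖(inner ℂ χ ψ : ℂ)‖ : ℂ))) • φ‖ ^ 2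
        = 1 / 4 * (1 + 1 / 4 * ‖ψp + φp‖ ^ 2))
    ∧ (1 / 4 : ℝ) ≤ (1 / 2 * (1 / 2) / (1 / 2 + 1 / 2)) *
        ‖(((Real.sqrt 2 : ℂ))⁻¹ * ((inner ℂ χ φ : ℂ) / (‖(inner ℂ χ φ : ℂ)‖ : ℂ))) • ψ
          + (((Real.sqrt 2 : ℂ))⁻¹ * ((inner ℂ χ ψ : ℂ) / (‖(inner ℂ χ ψ : ℂ)‖ : ℂ))) • φ‖ ^ 2 :=
  encoded_superposition_of_computations_general χ ψp φp hχ hψo hφo ψ φ hψ hφ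
end

section
/- Let χ be a unit vector and d ≥ 2. For unit vectors ψ₁,…,ψ_d with ⟨χ|ψ_i⟩ ≠ 0 for all i, and coefficients α₁,…,α_d ∈ ℂ, the vector Ψ_d = Σ_i α_i ( Π_{k≠i} ⟨χ|ψ_k⟩ / Π_{k≠i} |⟨χ|ψ_k⟩| ) ψ_i changes only by a global phase when each ψ_j is replaced by e^{iθ_j}ψ_j; hence |Ψ_d⟩⟨Ψ_d| is a well-defined function of the projectors P_{ψ₁},…,P_{ψ_d}. -/
open Finset

/-- The multi-state superposition
`Ψ_d = Σ_i α_i (Π_{k≠i}⟨χ|ψ_k⟩ / Π_{k≠i}|⟨χ|ψ_k⟩|) ψ_i`. -/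
noncomputable def supVecMulti {H : Type*} [NormedAddCommGroup H]
    [InnerProductSpace ℂ H] {d : ℕ} (α : Fin d → ℂ) (χ : H) (ψ : Fin d → H) : H :=
  ∑ i, (α i * (∏ k ∈ univ.erase i, (inner ℂ χ (ψ k) : ℂ))
      / ((∏ k ∈ univ.erase i, ‖(inner ℂ χ (ψ k) : ℂ)‖ : ℝ) : ℂ)) • ψ i

/-- The `i`-th term of `Ψ_d` picks up the phases `u_k`, `k ≠ i`, through the overlaps in its
coefficient and `u_i` through `ψ_i` itself, so every term picks up the same factor `Π_k u_k`;
the normalising moduli are unchanged because `‖u_k‖ = 1`. -/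
theorem supVecMulti_unit_smul {H : Type*} [NormedAddCommGroup H] [InnerProductSpace ℂ H]
    {d : ℕ} (α : Fin d → ℂ) (χ : H) (ψ : Fin d → H) (u : Fin d → ℂ) (hu : ∀ j, ‖u j‖ = 1) :
    supVecMulti α χ (fun j => u j • ψ j) = (∏ j, u j) • supVecMulti α χ ψ := by
  unfold supVecMulti
  rw [smul_sum]
  refine sum_congr rfl fun i _ => ?_
  simp only [inner_smul_right, norm_mul, hu, one_mul, prod_mul_distrib, smul_smul]
  rw [← mul_prod_erase univ u (mem_univ i)]
  ring_nf

theorem supVecMulti_phase_covariant_general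
    {H : Type*} [NormedAddCommGroup H] [InnerProductSpace ℂ H]
    {d : ℕ} (χ : H)
    (ψ : Fin d → H)
    (α : Fin d → ℂ) :
    ∀ θ : Fin d → ℝ, ∃ θ₀ : ℝ,
      supVecMulti α χ (fun j => Complex.exp (θ j * Complex.I) • ψ j)
        = Complex.exp (θ₀ * Complex.I) • supVecMulti α χ ψ := by
  intro θ
  refine ⟨∑ j, θ j, ?_⟩
  rw [supVecMulti_unit_smul α χ ψ _ fun j => Complex.norm_exp_ofReal_mul_I (θ j),
    ← Complex.exp_sum, ← sum_mul, Complex.ofReal_sum]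

/-- Phase covariance of the multi-state superposition: replacing each `ψ_j` by
`e^{iθ_j}ψ_j` changes `Ψ_d` only by a global phase; hence `|Ψ_d⟩⟨Ψ_d|` is a
well-defined function of the projectors `P_{ψ₁},…,P_{ψ_d}`. -/
theorem supVecMulti_phase_covariant
    {H : Type*} [NormedAddCommGroup H] [InnerProductSpace ℂ H]
    {d : ℕ} (hd : 2 ≤ d) (χ : H) (hχ : ‖χ‖ = 1)
    (ψ : Fin d → H) (hψ : ∀ i, ‖ψ i‖ = 1)
    (hover : ∀ i, (inner ℂ χ (ψ i) : ℂ) ≠ 0)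
    (α : Fin d → ℂ) (hα : ∑ i, ‖α i‖ ^ 2 = 1) :
    ∀ θ : Fin d → ℝ, ∃ θ₀ : ℝ,
      supVecMulti α χ (fun j => Complex.exp (θ j * Complex.I) • ψ j)
        = Complex.exp (θ₀ * Complex.I) • supVecMulti α χ ψ :=
  supVecMulti_phase_covariant_general χ ψ α
end

section
/- With Ψ_d = Σ_i α_i (Π_{k≠i}⟨χ|ψ_k⟩ / Π_{k≠i}|⟨χ|ψ_k⟩|) ψ_i, one has |Ψ_d⟩⟨Ψ_d| = Σ_i |α_i|² P_{ψ_i} + Σ_{i≠j} α_i ᾱ_j P_{ψ_i} M_{ij} P_{ψ_j} / ( √(Π_{k≠i} tr(P_χP_{ψ_k})) · √(Π_{l≠j} tr(P_χP_{ψ_l})) ), where M_{ij} = P_χ Π_{k≠i, k≠j}(P_χ P_{ψ_k} P_χ) and the empty product is the identity. -/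
open Finset

/-!
Write `Ψ_d = Σ_i c_i ψ_i` with `c_i = α_i w_i / |w_i|` and `w_i = Π_{k≠i} ⟨χ|ψ_k⟩`. Since
`v ↦ |v⟩⟨v|` is sesquilinear, `|Ψ_d⟩⟨Ψ_d| = Σ_{i,j} c_i c̄_j |ψ_i⟩⟨ψ_j|`. On the diagonal the phase
`w_i / |w_i|` has modulus one because `w_i ≠ 0`, so `c_i c̄_i = |α_i|²`. Off the
diagonal, `w_i w̄_j = ⟨ψ_i|χ⟩⟨χ|ψ_j⟩ Π_{k≠i,j} |⟨χ|ψ_k⟩|²`, and the scalar `⟨ψ_i|χ⟩⟨χ|ψ_j⟩` is exactly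
what `P_{ψ_i} P_χ P_{ψ_j} = ⟨ψ_i|χ⟩⟨χ|ψ_j⟩ |ψ_i⟩⟨ψ_j|` produces.
-/

lemma prod_erase_mul_conj_prod_erase {ι : Type*} [DecidableEq ι] {s : Finset ι} (z : ι → ℂ)
    {i j : ι} (hi : i ∈ s) (hj : j ∈ s) (hij : i ≠ j) :
    (∏ k ∈ s.erase i, z k) * starRingEnd ℂ (∏ l ∈ s.erase j, z l)
      = (∏ k ∈ (s.erase i).erase j, z k * starRingEnd ℂ (z k)) * starRingEnd ℂ (z i) * z j := by
  rw [← mul_prod_erase _ z (mem_erase.2 ⟨hij.symm, hj⟩),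
    ← mul_prod_erase _ z (mem_erase.2 ⟨hij, hi⟩), erase_right_comm, map_mul, map_prod,
    prod_mul_distrib]
  ring

lemma Real.sqrt_prod_norm_sq {ι : Type*} (s : Finset ι) (z : ι → ℂ) :
    √(∏ k ∈ s, ‖z k‖ ^ 2) = ‖∏ k ∈ s, z k‖ := by
  rw [prod_pow, Real.sqrt_sq (by positivity), norm_prod]

lemma mul_div_norm_mul_conj (a b w v : ℂ) :
    a * w / ‖w‖ * starRingEnd ℂ (b * v / ‖v‖)
      = a * starRingEnd ℂ b / ((‖w‖ * ‖v‖ : ℝ) : ℂ) * (w * starRingEnd ℂ v) := by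
  simp only [map_div₀, map_mul, Complex.conj_ofReal]
  push_cast
  ring

lemma mul_div_norm_mul_conj_self (a : ℂ) {w : ℂ} (hw : w ≠ 0) :
    a * w / ‖w‖ * starRingEnd ℂ (a * w / ‖w‖) = ((‖a‖ ^ 2 : ℝ) : ℂ) := by
  have : (‖w‖ : ℂ) ≠ 0 := by simpa using hw
  rw [mul_div_norm_mul_conj, Complex.mul_conj', Complex.mul_conj']
  field_simp
  push_cast
  ring

section RankOne

variable {H : Type*} [NormedAddCommGroup H] [InnerProductSpace ℂ H]

lemma rankOne_eq_toLinearMap (v : H) :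
    rankOne v = (InnerProductSpace.rankOne ℂ v v : H →ₗ[ℂ] H) := rfl

lemma rankOne_sum_smul {ι : Type*} (s : Finset ι) (c : ι → ℂ) (ψ : ι → H) :
    rankOne (∑ i ∈ s, c i • ψ i)
      = ∑ i ∈ s, ∑ j ∈ s,
          (c i * starRingEnd ℂ (c j)) • (InnerProductSpace.rankOne ℂ (ψ i) (ψ j) : H →ₗ[ℂ] H) := by
  simp only [rankOne_eq_toLinearMap, map_sum, map_smul, map_smulₛₗ, _root_.sum_apply, smul_apply,
    ContinuousLinearMap.toLinearMap_sum, ContinuousLinearMap.toLinearMap_smul, smul_sum, smul_smul]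
  rw [sum_comm]
  exact sum_congr rfl fun _ _ => sum_congr rfl fun _ _ => by rw [mul_comm]

lemma rankOne_comp_smul_rankOne_comp_rankOne (u v w : H) (c : ℂ) :
    rankOne u ∘ₗ (c • rankOne v) ∘ₗ rankOne w
      = (c * inner ℂ u v * inner ℂ v w) • (InnerProductSpace.rankOne ℂ u w : H →ₗ[ℂ] H) := by
  ext x
  simp only [rankOne_eq_toLinearMap, LinearMap.comp_apply, LinearMap.smul_apply,
    ContinuousLinearMap.coe_coe, InnerProductSpace.rankOne_apply, inner_smul_right, smul_smul]
  ring_nf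

end RankOne

theorem supVecMulti_projector_formula_general
    {H : Type*} [NormedAddCommGroup H] [InnerProductSpace ℂ H]
    {d : ℕ} (χ : H)
    (ψ : Fin d → H)
    (hover : ∀ i, (inner ℂ χ (ψ i) : ℂ) ≠ 0)
    (α : Fin d → ℂ) :
    rankOne (supVecMulti α χ ψ)
      = ∑ i, ((‖α i‖ ^ 2 : ℝ) : ℂ) • rankOne (ψ i)
        + ∑ i, ∑ j ∈ univ.erase i,
            ((α i * starRingEnd ℂ (α j)) /
              ((Real.sqrt (∏ k ∈ univ.erase i, ‖(inner ℂ χ (ψ k) : ℂ)‖ ^ 2) *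
                Real.sqrt (∏ l ∈ univ.erase j, ‖(inner ℂ χ (ψ l) : ℂ)‖ ^ 2) : ℝ) : ℂ)) •
              (rankOne (ψ i) ∘ₗ
                ((∏ k ∈ (univ.erase i).erase j,
                    ((inner ℂ χ (ψ k) : ℂ) * (inner ℂ (ψ k) χ : ℂ))) • rankOne χ) ∘ₗ
                rankOne (ψ j)) := by
  have hw : ∀ i, ∏ k ∈ univ.erase i, inner ℂ χ (ψ k) ≠ 0 := fun i =>
    prod_ne_zero_iff.2 fun k _ => hover k
  simp only [supVecMulti, ← norm_prod, rankOne_sum_smul, Real.sqrt_prod_norm_sq,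
    rankOne_comp_smul_rankOne_comp_rankOne, ← sum_add_distrib, ← inner_conj_symm _ χ]
  refine sum_congr rfl fun i _ => ?_
  rw [← add_sum_erase _ _ (mem_univ i), mul_div_norm_mul_conj_self _ (hw i)]
  refine congrArg _ (sum_congr rfl fun j hj => ?_)
  rw [mul_div_norm_mul_conj, prod_erase_mul_conj_prod_erase _ (mem_univ i) (mem_univ j)
    (mem_erase.1 hj).1.symm, smul_smul, mul_assoc]

/-- Explicit formula for the projector onto the multi-state superposition:
`|Ψ_d⟩⟨Ψ_d| = Σ_i |α_i|² P_{ψ_i}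
 + Σ_{i≠j} α_i ᾱ_j P_{ψ_i} M_{ij} P_{ψ_j} / (√(Π_{k≠i}tr(P_χP_{ψ_k}))·√(Π_{l≠j}tr(P_χP_{ψ_l})))`,
where `M_{ij} = P_χ Π_{k≠i,j}(P_χ P_{ψ_k} P_χ) = (Π_{k≠i,j}⟨χ|ψ_k⟩⟨ψ_k|χ⟩)·P_χ`
(the empty product being the identity). -/
theorem supVecMulti_projector_formula
    {H : Type*} [NormedAddCommGroup H] [InnerProductSpace ℂ H]
    {d : ℕ} (hd : 2 ≤ d) (χ : H) (hχ : ‖χ‖ = 1)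
    (ψ : Fin d → H) (hψ : ∀ i, ‖ψ i‖ = 1)
    (hover : ∀ i, (inner ℂ χ (ψ i) : ℂ) ≠ 0)
    (α : Fin d → ℂ) (hα : ∑ i, ‖α i‖ ^ 2 = 1) :
    rankOne (supVecMulti α χ ψ)
      = ∑ i, ((‖α i‖ ^ 2 : ℝ) : ℂ) • rankOne (ψ i)
        + ∑ i, ∑ j ∈ univ.erase i,
            ((α i * starRingEnd ℂ (α j)) /
              ((Real.sqrt (∏ k ∈ univ.erase i, ‖(inner ℂ χ (ψ k) : ℂ)‖ ^ 2) *
                Real.sqrt (∏ l ∈ univ.erase j, ‖(inner ℂ χ (ψ l) : ℂ)‖ ^ 2) : ℝ) : ℂ)) •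
              (rankOne (ψ i) ∘ₗ
                ((∏ k ∈ (univ.erase i).erase j,
                    ((inner ℂ χ (ψ k) : ℂ) * (inner ℂ (ψ k) χ : ℂ))) • rankOne χ) ∘ₗ
                rankOne (ψ j)) :=
  supVecMulti_projector_formula_general χ ψ hover α
end

section
/- Let χ ∈ H be a unit vector and define the d-party protocol Λ_sup^d = Λ₄∘Λ₃∘Λ₂∘Λ₁ on ℂ^d⊗H^{⊗d} with V₁ = Σ_{i=1}^d |i⟩⟨i|⊗S_{1,i}, V₂ = I_d⊗I⊗(|χ⟩⟨χ|)^{⊗(d-1)}, V₃ = P_{μ_d}⊗I^{⊗d} where μ_d ∝ Σ_i (Π_{k≠i}√c_k)^{-1}|i⟩ normalized, and Λ₄ = tr over all factors except the second H factor. Then for ν = Σ_i α_i|i⟩ a unit vector in ℂ^d and unit vectors ψ_i ∈ H with |⟨χ|ψ_i⟩|² = c_i > 0, Λ_sup^d(P_ν⊗⊗_iP_{ψ_i}) is proportional to |Ψ_d⟩⟨Ψ_d| with Ψ_d = Σ_i α_i (Π_{k≠i}⟨χ|ψ_k⟩/Π_{k≠i}|⟨χ|ψ_k⟩|)ψ_i.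 -/
/-!
Every stage of the protocol keeps the state in tensor-product form. In branch `a`, `V₁`
moves `ψ_a` into the first `H`-factor, and `V₂` projects every other factor onto `χ`, so
the branch becomes `α_a (∏_{k≠a} ⟨χ|ψ_k⟩) |a⟩ ⊗ ψ_a ⊗ χ^{⊗(d-1)}`. Projecting the control
register onto `μ` merges the branches into the product state `μ ⊗ Φ ⊗ χ^{⊗(d-1)}` with
`Φ = Σ_b conj(μ_b) α_b (∏_{k≠b} ⟨χ|ψ_k⟩) ψ_b`, whose partial trace is a multiple of
`|Φ⟩⟨Φ|`. Finally `conj(μ_b)` is a common constant times `(∏_{k≠b} |⟨χ|ψ_k⟩|)⁻¹`,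
because `c_k = |⟨χ|ψ_k⟩|²`, so `Φ` is a multiple of `Ψ_d`.
-/

open Matrix Finset

/-- The matrix of the unitary `S_{1,i}` swapping the factor `i0` and the factor `i`
of `H^{⊗d}` (basis vectors of `H^{⊗d}` are indexed by functions `Fin d → Fin n`). -/
def swapFactors {n d : ℕ} (i0 i : Fin d) :
    Matrix (Fin d → Fin n) (Fin d → Fin n) ℂ :=
  fun f g => if f = g ∘ (Equiv.swap i0 i) then 1 else 0

/-- `V₁ = Σ_i |i⟩⟨i|⊗S_{1,i}` on `ℂ^d ⊗ H^{⊗d}`. -/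
def V1d {n d : ℕ} (i0 : Fin d) :
    Matrix (Fin d × (Fin d → Fin n)) (Fin d × (Fin d → Fin n)) ℂ :=
  fun p q => if p.1 = q.1 then swapFactors i0 p.1 p.2 q.2 else 0

/-- `V₂ = I_d ⊗ I ⊗ |χ⟩⟨χ|^{⊗(d-1)}`. -/
def V2d {n d : ℕ} (i0 : Fin d) (χ : Fin n → ℂ) :
    Matrix (Fin d × (Fin d → Fin n)) (Fin d × (Fin d → Fin n)) ℂ :=
  fun p q => if p.1 = q.1 ∧ p.2 i0 = q.2 i0 then
    ∏ k ∈ univ.erase i0, χ (p.2 k) * star (χ (q.2 k)) else 0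

/-- `V₃ = P_{μ} ⊗ I^{⊗d}`. -/
def V3d {n d : ℕ} (μ : Fin d → ℂ) :
    Matrix (Fin d × (Fin d → Fin n)) (Fin d × (Fin d → Fin n)) ℂ :=
  fun p q => if p.2 = q.2 then μ p.1 * star (μ q.1) else 0

/-- `Λ₄`: the partial trace over all tensor factors of `ℂ^d ⊗ H^{⊗d}` except the
`H`-factor at position `i0`. -/
noncomputable def ptrAllButSecond {n d : ℕ} (i0 : Fin d)
    (M : Matrix (Fin d × (Fin d → Fin n)) (Fin d × (Fin d → Fin n)) ℂ) :
    Matrix (Fin n) (Fin n) ℂ :=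
  fun i j => ∑ a : Fin d, ∑ g : Fin d → Fin n,
    if g i0 = j then M (a, Function.update g i0 i) (a, g) else 0


section PureTensor

variable {ι m R : Type*} [Fintype ι] [CommSemiring R]

def pureTensor (x : ι → m → R) : (ι → m) → R := fun f => ∏ k, x k (f k)

def piKron (A : ι → Matrix m m R) : Matrix (ι → m) (ι → m) R :=
  fun f g => ∏ k, A k (f k) (g k)

theorem pureTensor_smul (c : ι → R) (x : ι → m → R) :
    pureTensor (fun k => c k • x k) = (∏ k, c k) • pureTensor x := by
  ext f
  simp [pureTensor, prod_mul_distrib]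

theorem piKron_mulVec_pureTensor [DecidableEq ι] [Fintype m] (A : ι → Matrix m m R)
    (x : ι → m → R) :
    piKron A *ᵥ pureTensor x = pureTensor fun k => A k *ᵥ x k := by
  ext f
  simp only [mulVec, dotProduct, piKron, pureTensor, ← prod_mul_distrib, Fintype.prod_sum]

theorem pureTensor_update_apply [DecidableEq ι] (x : ι → m → R) (i : ι) (y : m → R)
    (f : ι → m) :
    pureTensor (Function.update x i y) f = y (f i) * ∏ k ∈ univ.erase i, x k (f k) := by
  rw [pureTensor, ← mul_prod_erase _ _ (mem_univ i), Function.update_self]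
  congr 1
  exact prod_congr rfl fun k hk => by rw [Function.update_of_ne (ne_of_mem_erase hk)]

theorem sum_ite_apply_eq_prod_erase [DecidableEq ι] [Fintype m] [DecidableEq m]
    (i : ι) (j : m) (H : ι → m → R) :
    (∑ g : ι → m, if g i = j then ∏ k ∈ univ.erase i, H k (g k) else 0)
      = ∏ k ∈ univ.erase i, ∑ a, H k a := by
  calc (∑ g : ι → m, if g i = j then ∏ k ∈ univ.erase i, H k (g k) else 0)
      = ∑ g, pureTensor (Function.update H i fun a => if a = j then 1 else 0) g := by
        simp only [pureTensor_update_apply, ite_mul, one_mul, zero_mul]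
    _ = ∏ k, ∑ a, Function.update H i (fun a => if a = j then 1 else 0) k a :=
        (Fintype.prod_sum _).symm
    _ = ∏ k ∈ univ.erase i, ∑ a, H k a := by
        rw [← mul_prod_erase _ _ (mem_univ i), Function.update_self, sum_ite_eq',
          if_pos (mem_univ j), one_mul]
        exact prod_congr rfl fun k hk => by rw [Function.update_of_ne (ne_of_mem_erase hk)]

theorem sum_mul_pureTensor_update [DecidableEq ι] {κ : Type*} [Fintype κ] (x : ι → m → R)
    (i : ι) (c : κ → R) (y : κ → m → R) (f : ι → m) :
    ∑ b, c b * pureTensor (Function.update x i (y b)) f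
      = pureTensor (Function.update x i (∑ b, c b • y b)) f := by
  simp only [pureTensor_update_apply, Finset.sum_apply, Pi.smul_apply, smul_eq_mul, sum_mul,
    mul_assoc]

theorem piKron_update_one_vecMulVec_mulVec_pureTensor [DecidableEq ι] [Fintype m]
    [DecidableEq m] [StarRing R] (i : ι) (χ : m → R) (y : ι → m → R) :
    piKron (Function.update (fun _ => vecMulVec χ (star χ)) i 1) *ᵥ pureTensor y
      = (∏ k ∈ univ.erase i, star χ ⬝ᵥ y k) •
          pureTensor (Function.update (fun _ => χ) i (y i)) := by
  have hfactor : (fun k => Function.update (fun _ => vecMulVec χ (star χ)) i 1 k *ᵥ y k)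
      = fun k => Function.update (fun k => star χ ⬝ᵥ y k) i 1 k •
          Function.update (fun _ => χ) i (y i) k := by
    funext k
    rcases eq_or_ne k i with rfl | hk
    · simp
    · simp [hk, vecMulVec_mulVec]
  rw [piKron_mulVec_pureTensor, hfactor, pureTensor_smul, prod_update_of_mem (mem_univ i),
    one_mul, sdiff_singleton_eq_erase]

end PureTensor

theorem mul_vecMulVec_star_mul_conjTranspose {l m R : Type*} [Fintype m] [Semiring R]
    [StarRing R] (M : Matrix l m R) (v : m → R) :
    M * vecMulVec v (star v) * Mᴴ = vecMulVec (M *ᵥ v) (star (M *ᵥ v)) := by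
  rw [mul_vecMulVec, vecMulVec_mul, star_mulVec]

theorem vecMulVec_smul_star {m : Type*} (τ : ℂ) (v : m → ℂ) :
    vecMulVec (τ • v) (star (τ • v)) = (τ * star τ) • vecMulVec v (star v) := by
  rw [star_smul, smul_vecMulVec, vecMulVec_smul, smul_smul]

theorem mulVec_eq_blockwise {κ m R : Type*} [Fintype κ] [DecidableEq κ] [Fintype m]
    [NonUnitalNonAssocSemiring R] (M : Matrix (κ × m) (κ × m) R) (B : κ → Matrix m m R)
    (hM : ∀ p q, M p q = if p.1 = q.1 then B p.1 p.2 q.2 else 0) (w : κ × m → R) :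
    M *ᵥ w = fun p => (B p.1 *ᵥ fun f => w (p.1, f)) p.2 := by
  ext p
  simp [mulVec, dotProduct, Fintype.sum_prod_type, hM, ite_mul]

theorem prod_erase_comp_swap {ι M : Type*} [Fintype ι] [DecidableEq ι] [CommMonoid M]
    (i j : ι) (F : ι → M) :
    ∏ k ∈ univ.erase i, F (Equiv.swap i j k) = ∏ k ∈ univ.erase j, F k :=
  prod_equiv (Equiv.swap i j) (by simp [Equiv.swap_apply_eq_iff]) fun _ _ => rfl

section Protocol

variable {n d : ℕ}

theorem swapFactors_mulVec_pureTensor (i j : Fin d) (x : Fin d → Fin n → ℂ) :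
    swapFactors i j *ᵥ pureTensor x = pureTensor (x ∘ Equiv.swap i j) := by
  ext f
  have hcond : ∀ g : Fin d → Fin n, f = g ∘ Equiv.swap i j ↔ f ∘ Equiv.swap i j = g := by
    intro g
    constructor <;> rintro rfl <;> ext <;> simp
  simp only [mulVec, dotProduct, swapFactors, hcond, ite_mul, one_mul, zero_mul,
    sum_ite_eq, mem_univ, if_true]
  simpa [pureTensor] using Equiv.prod_comp (Equiv.swap i j) fun k => x (Equiv.swap i j k) (f k)

theorem V1d_mulVec (i0 : Fin d) (α : Fin d → ℂ) (ψ : Fin d → Fin n → ℂ) :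
    V1d i0 *ᵥ (fun p => α p.1 * pureTensor ψ p.2)
      = fun p => α p.1 * pureTensor (ψ ∘ Equiv.swap i0 p.1) p.2 := by
  rw [mulVec_eq_blockwise (V1d i0) (fun a => swapFactors i0 a) fun _ _ => rfl]
  ext ⟨a, f⟩
  rw [show (fun f => α a * pureTensor ψ f) = α a • pureTensor ψ from rfl, mulVec_smul,
    swapFactors_mulVec_pureTensor]
  rfl

theorem V2d_apply (i0 : Fin d) (χ : Fin n → ℂ) (p q : Fin d × (Fin d → Fin n)) :
    V2d i0 χ p q = if p.1 = q.1 then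
      piKron (Function.update (fun _ => vecMulVec χ (star χ)) i0 1) p.2 q.2 else 0 := by
  rw [V2d, ite_and, piKron, ← mul_prod_erase _ _ (mem_univ i0), Function.update_self, one_apply]
  have hrest : ∏ k ∈ univ.erase i0,
      Function.update (fun _ => vecMulVec χ (star χ)) i0 1 k (p.2 k) (q.2 k)
        = ∏ k ∈ univ.erase i0, χ (p.2 k) * star (χ (q.2 k)) :=
    prod_congr rfl fun k hk => by rw [Function.update_of_ne (ne_of_mem_erase hk)]; rfl
  rw [hrest]
  split_ifs <;> simp

theorem V2d_mulVec_pureTensor_comp_swap (i0 : Fin d) (χ : Fin n → ℂ) (α : Fin d → ℂ)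
    (ψ : Fin d → Fin n → ℂ) :
    V2d i0 χ *ᵥ (fun p => α p.1 * pureTensor (ψ ∘ Equiv.swap i0 p.1) p.2)
      = fun p => (α p.1 * ∏ k ∈ univ.erase p.1, star χ ⬝ᵥ ψ k) *
          pureTensor (Function.update (fun _ => χ) i0 (ψ p.1)) p.2 := by
  rw [mulVec_eq_blockwise _ (fun _ => piKron _) (V2d_apply i0 χ)]
  ext ⟨a, f⟩
  rw [show (fun f => α a * pureTensor (ψ ∘ Equiv.swap i0 a) f)
      = α a • pureTensor (ψ ∘ Equiv.swap i0 a) from rfl, mulVec_smul,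
    piKron_update_one_vecMulVec_mulVec_pureTensor, smul_smul]
  simp [prod_erase_comp_swap i0 a fun k => star χ ⬝ᵥ ψ k]

def tensorState (i0 : Fin d) (μ : Fin d → ℂ) (φ χ : Fin n → ℂ) :
    Fin d × (Fin d → Fin n) → ℂ :=
  fun p => μ p.1 * pureTensor (Function.update (fun _ => χ) i0 φ) p.2

theorem V3d_mulVec (μ : Fin d → ℂ) (w : Fin d × (Fin d → Fin n) → ℂ) :
    V3d μ *ᵥ w = fun p => μ p.1 * ∑ b, star (μ b) * w (b, p.2) := by
  ext ⟨a, f⟩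
  simp [mulVec, dotProduct, Fintype.sum_prod_type, V3d, ite_mul, mul_sum, mul_assoc]

theorem V3d_mulVec_pureTensor_update (i0 : Fin d) (μ c : Fin d → ℂ) (χ : Fin n → ℂ)
    (ψ : Fin d → Fin n → ℂ) :
    V3d μ *ᵥ (fun p => c p.1 * pureTensor (Function.update (fun _ => χ) i0 (ψ p.1)) p.2)
      = tensorState i0 μ (∑ b, (star (μ b) * c b) • ψ b) χ := by
  rw [V3d_mulVec]
  ext p
  simp only [← mul_assoc, sum_mul_pureTensor_update, tensorState]

theorem ptrAllButSecond_tensorState (i0 : Fin d) (μ : Fin d → ℂ) (φ χ : Fin n → ℂ) :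
    ptrAllButSecond i0 (vecMulVec (tensorState i0 μ φ χ) (star (tensorState i0 μ φ χ)))
      = ((∑ a, μ a * star (μ a)) * (χ ⬝ᵥ star χ) ^ (d - 1)) • vecMulVec φ (star φ) := by
  ext i j
  have hupdate : ∀ g : Fin d → Fin n,
      ∏ k ∈ univ.erase i0, χ (Function.update g i0 i k) = ∏ k ∈ univ.erase i0, χ (g k) :=
    fun g => prod_congr rfl fun k hk => by rw [Function.update_of_ne (ne_of_mem_erase hk)]
  have hterm : ∀ (a : Fin d) (g : Fin d → Fin n),
      (if g i0 = j then tensorState i0 μ φ χ (a, Function.update g i0 i) *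
          star (tensorState i0 μ φ χ (a, g)) else 0)
        = μ a * star (μ a) * (φ i * star (φ j)) *
          (if g i0 = j then ∏ k ∈ univ.erase i0, χ (g k) * star (χ (g k)) else 0) := by
    intro a g
    split_ifs with hg
    · simp only [tensorState, pureTensor_update_apply, Function.update_self, hupdate, hg,
        star_mul', star_prod, prod_mul_distrib]
      ring
    · rw [mul_zero]
  simp only [ptrAllButSecond, vecMulVec_apply, Pi.star_apply, hterm, ← mul_sum,
    ← sum_mul, sum_ite_apply_eq_prod_erase i0 j fun _ a => χ a * star (χ a), prod_const,
    card_erase_of_mem (mem_univ i0), card_univ, Fintype.card_fin, Matrix.smul_apply,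
    smul_eq_mul]
  simp only [dotProduct, Pi.star_apply]
  ring

theorem ptrAllButSecond_protocol (i0 : Fin d) (χ : Fin n → ℂ) (μ α : Fin d → ℂ)
    (ψ : Fin d → Fin n → ℂ) :
    ptrAllButSecond i0 ((V3d μ * V2d i0 χ * V1d i0) *
        vecMulVec (fun p => α p.1 * pureTensor ψ p.2) (star fun p => α p.1 * pureTensor ψ p.2) *
        (V3d μ * V2d i0 χ * V1d i0)ᴴ)
      = ((∑ a, μ a * star (μ a)) * (χ ⬝ᵥ star χ) ^ (d - 1)) •
        vecMulVec (∑ b, (star (μ b) * (α b * ∏ k ∈ univ.erase b, star χ ⬝ᵥ ψ k)) • ψ b)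
          (star (∑ b, (star (μ b) * (α b * ∏ k ∈ univ.erase b, star χ ⬝ᵥ ψ k)) • ψ b)) := by
  rw [mul_vecMulVec_star_mul_conjTranspose, ← mulVec_mulVec, ← mulVec_mulVec, V1d_mulVec,
    V2d_mulVec_pureTensor_comp_swap, V3d_mulVec_pureTensor_update i0 μ
      (fun a => α a * ∏ k ∈ univ.erase a, star χ ⬝ᵥ ψ k), ptrAllButSecond_tensorState]

end Protocol

/-- The `d`-party superposition protocol `Λ_sup^d = Λ₄∘Λ₃∘Λ₂∘Λ₁` maps
`P_ν ⊗ ⊗_i P_{ψ_i}` (with `ν = Σ_i α_i|i⟩` and `|⟨χ|ψ_i⟩|² = c_i > 0`) to a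
multiple of `|Ψ_d⟩⟨Ψ_d|`, where
`Ψ_d = Σ_i α_i (Π_{k≠i}⟨χ|ψ_k⟩/Π_{k≠i}|⟨χ|ψ_k⟩|)ψ_i`. -/
theorem multi_superposition_protocol {n d : ℕ} (hd : 2 ≤ d)
    (χ : Fin n → ℂ)
    (ψ : Fin d → (Fin n → ℂ))
    (c : Fin d → ℝ)
    (hover : ∀ i, ‖star χ ⬝ᵥ ψ i‖ ^ 2 = c i)
    (α : Fin d → ℂ) :
    ∃ t : ℂ,
      ptrAllButSecond (⟨0, by omega⟩ : Fin d)
        ((V3d (fun a => ((Real.sqrt (∑ b, (∏ k ∈ univ.erase b, c k)⁻¹))⁻¹ : ℂ) *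
              ((Real.sqrt (∏ k ∈ univ.erase a, c k) : ℂ))⁻¹) *
            V2d (⟨0, by omega⟩ : Fin d) χ * V1d (⟨0, by omega⟩ : Fin d)) *
          vecMulVec (fun p => α p.1 * ∏ k, ψ k (p.2 k))
            (star fun p => α p.1 * ∏ k, ψ k (p.2 k)) *
          (V3d (fun a => ((Real.sqrt (∑ b, (∏ k ∈ univ.erase b, c k)⁻¹))⁻¹ : ℂ) *
              ((Real.sqrt (∏ k ∈ univ.erase a, c k) : ℂ))⁻¹) *
            V2d (⟨0, by omega⟩ : Fin d) χ * V1d (⟨0, by omega⟩ : Fin d))ᴴ)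
      = t • vecMulVec
          (fun i => ∑ a, α a * ((∏ k ∈ univ.erase a, (star χ ⬝ᵥ ψ k))
              / ((∏ k ∈ univ.erase a, ‖star χ ⬝ᵥ ψ k‖ : ℝ) : ℂ)) * ψ a i)
          (star fun i => ∑ a, α a * ((∏ k ∈ univ.erase a, (star χ ⬝ᵥ ψ k))
              / ((∏ k ∈ univ.erase a, ‖star χ ⬝ᵥ ψ k‖ : ℝ) : ℂ)) * ψ a i) := by
  have hsqrt : ∀ b,
      Real.sqrt (∏ k ∈ univ.erase b, c k) = ∏ k ∈ univ.erase b, ‖star χ ⬝ᵥ ψ k‖ := fun b => by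
      rw [← Real.sqrt_sq (prod_nonneg fun k _ => norm_nonneg _), ← prod_pow]
      simp only [hover]
  set τ : ℂ := ((Real.sqrt (∑ b, (∏ k ∈ univ.erase b, c k)⁻¹) : ℂ))⁻¹
  have hweights : (∑ b, (star (τ * ((Real.sqrt (∏ k ∈ univ.erase b, c k) : ℂ))⁻¹) *
      (α b * ∏ k ∈ univ.erase b, star χ ⬝ᵥ ψ k)) • ψ b)
      = τ • fun i => ∑ a, α a * ((∏ k ∈ univ.erase a, (star χ ⬝ᵥ ψ k))
              / ((∏ k ∈ univ.erase a, ‖star χ ⬝ᵥ ψ k‖ : ℝ) : ℂ)) * ψ a i := by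
    ext i
    simp only [Finset.sum_apply, Pi.smul_apply, smul_eq_mul, mul_sum, hsqrt, star_mul',
      star_inv₀, Complex.star_def, Complex.conj_ofReal, τ]
    refine sum_congr rfl fun b _ => ?_
    ring
  have h := ptrAllButSecond_protocol (⟨0, by omega⟩ : Fin d) χ
    (fun a => τ * ((Real.sqrt (∏ k ∈ univ.erase a, c k) : ℂ))⁻¹) α ψ
  rw [hweights, vecMulVec_smul_star, smul_smul] at h
  exact ⟨_, h⟩
end
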